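/- arXiv:1412.5816 — 10 statements merged into one kernel-verified Lean document; each statement's English description precedes it below -/
import Mathlib

section
/- Let X be a separable Banach space and μ a Borel probability measure on X with full support. Let û ∈ X be a MAP estimate for μ, let h ∈ X, and suppose the limit r = lim_{ε→0} μ(B_ε(û − h))/μ(B_ε(û)) exists. Then r ≤ 1. -/
open MeasureTheory Metric Filter Topology
open scoped ENNReal

theorem ENNReal.div_le_inv_div_of_le {a b c : ℝ≥0∞} (hac : a ≤ c) (hbc : b ≤ c) :
    a / b ≤ (b / c)⁻¹ := by
  rcases eq_or_ne b 0 with rfl | hb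
  · rcases eq_or_ne a 0 with rfl | _ <;> simp
  rcases eq_or_ne c ⊤ with rfl | hc
  · simp
  rw [ENNReal.inv_div (Or.inl hc) (Or.inr hb)]
  exact ENNReal.div_le_div_right hac b

theorem stmt1_general {X : Type*} [NormedAddCommGroup X] [MeasurableSpace X]
    (μ : Measure X)
    (uhat : X)
    (hMAP : Tendsto (fun ε : ℝ => μ (ball uhat ε) / (⨆ u : X, μ (ball u ε)))
      (𝓝[>] 0) (𝓝 1))
    (h : X) (r : ℝ≥0∞)
    (hr : Tendsto (fun ε : ℝ => μ (ball (uhat - h) ε) / μ (ball uhat ε))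
      (𝓝[>] 0) (𝓝 r)) :
    r ≤ 1 := by
  have hinv : Tendsto (fun ε : ℝ => (μ (ball uhat ε) / ⨆ u : X, μ (ball u ε))⁻¹)
      (𝓝[>] 0) (𝓝 1) := by
    simpa using hMAP.inv
  exact le_of_tendsto_of_tendsto' hr hinv fun ε =>
    ENNReal.div_le_inv_div_of_le (le_iSup (fun u => μ (ball u ε)) (uhat - h))
      (le_iSup (fun u => μ (ball u ε)) uhat)

/-- Lemma 3.4: every MAP estimate is a weak MAP estimate:
the small-ball ratio limit at a MAP estimate is at most one. -/
theorem stmt1 {X : Type*} [NormedAddCommGroup X] [NormedSpace ℝ X] [CompleteSpace X]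
    [TopologicalSpace.SeparableSpace X] [MeasurableSpace X] [BorelSpace X]
    (μ : Measure X) [IsProbabilityMeasure μ]
    (hfull : ∀ u : X, ∀ ε : ℝ, 0 < ε → 0 < μ (ball u ε))
    (uhat : X)
    (hMAP : Tendsto (fun ε : ℝ => μ (ball uhat ε) / (⨆ u : X, μ (ball u ε)))
      (𝓝[>] 0) (𝓝 1))
    (h : X) (r : ℝ≥0∞)
    (hr : Tendsto (fun ε : ℝ => μ (ball (uhat - h) ε) / μ (ball uhat ε))
      (𝓝[>] 0) (𝓝 r)) :
    r ≤ 1 :=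
  stmt1_general μ uhat hMAP h r hr
end

section
/- Let X be a separable Banach space and μ a convex Borel probability measure on X. If û and v̂ are MAP estimates for μ and t ∈ [0,1], then w = (1−t)û + t v̂ is also a MAP estimate for μ. -/
open MeasureTheory Metric Filter Topology Pointwise
open scoped ENNReal

/-!
Convexity applied to the balls `B_ε(v̂)` and `B_ε(û)`, whose Minkowski combination lies in
`B_ε(w)`, gives `μ(B_ε(w)) ≥ μ(B_ε(v̂))^t μ(B_ε(û))^(1-t)`. Dividing by `M^ε`, the ratio
`μ(B_ε(w)) / M^ε` is squeezed between `1` and a product of powers of two ratios tending to `1`.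
-/

theorem smul_ball_add_smul_ball_subset {E : Type*} [SeminormedAddCommGroup E] [NormedSpace ℝ E]
    (x y : E) (ε : ℝ) {a b : ℝ} (ha : 0 ≤ a) (hb : 0 ≤ b) (hab : a + b = 1) :
    a • ball x ε + b • ball y ε ⊆ ball (a • x + b • y) ε := by
  rintro _ ⟨_, ⟨x', hx', rfl⟩, _, ⟨y', hy', rfl⟩, rfl⟩
  have hx0 : x' - x ∈ ball (0 : E) ε := by rwa [mem_ball_zero_iff, ← mem_ball_iff_norm]
  have hy0 : y' - y ∈ ball (0 : E) ε := by rwa [mem_ball_zero_iff, ← mem_ball_iff_norm]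
  rw [mem_ball_iff_norm, ← mem_ball_zero_iff]
  convert convex_ball (0 : E) ε hx0 hy0 ha hb hab using 1
  simp only [smul_sub]
  abel

namespace ENNReal

theorem div_rpow_mul_div_rpow_one_sub (a b : ℝ≥0∞) {M : ℝ≥0∞} (hM0 : M ≠ 0) (hMtop : M ≠ ∞)
    {t : ℝ} (ht0 : 0 ≤ t) (ht1 : t ≤ 1) :
    (a / M) ^ t * (b / M) ^ (1 - t) = a ^ t * b ^ (1 - t) / M := by
  have hM : M⁻¹ ^ t * M⁻¹ ^ (1 - t) = M⁻¹ := by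
    rw [← rpow_add _ _ (ENNReal.inv_ne_zero.2 hMtop) (inv_ne_top.2 hM0), add_sub_cancel, rpow_one]
  simp only [div_eq_mul_inv, mul_rpow_of_nonneg _ _ ht0, mul_rpow_of_nonneg _ _ (sub_nonneg.2 ht1)]
  rw [mul_mul_mul_comm, hM, mul_right_comm]

theorem tendsto_div_of_rpow_mul_rpow_le {α : Type*} {l : Filter α} {f g h M : α → ℝ≥0∞}
    {t : ℝ} (ht0 : 0 ≤ t) (ht1 : t ≤ 1) (hM : ∀ x, M x ≠ ∞)
    (hf : Tendsto (fun x => f x / M x) l (𝓝 1)) (hg : Tendsto (fun x => g x / M x) l (𝓝 1))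
    (hfgh : ∀ᶠ x in l, f x ^ t * g x ^ (1 - t) ≤ h x) (hhM : ∀ᶠ x in l, h x ≤ M x) :
    Tendsto (fun x => h x / M x) l (𝓝 1) := by
  -- `f x / 0` is `0` or `∞`, so `M` is eventually nonzero
  have hM0 : ∀ᶠ x in l, M x ≠ 0 := by
    filter_upwards [hf.eventually_ne one_ne_zero, hf.eventually_ne one_ne_top] with x hx0 hxtop hMx
    by_cases hfx : f x = 0
    · simp [hMx, hfx] at hx0
    · exact hxtop (by rw [hMx, div_zero hfx])
  have hlow : Tendsto (fun x => (f x / M x) ^ t * (g x / M x) ^ (1 - t)) l (𝓝 1) := by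
    have hft := ((continuous_rpow_const (y := t)).tendsto 1).comp hf
    have hgt := ((continuous_rpow_const (y := 1 - t)).tendsto 1).comp hg
    rw [one_rpow] at hft hgt
    simpa using ENNReal.Tendsto.mul hft (Or.inl one_ne_zero) hgt (Or.inl one_ne_zero)
  refine tendsto_of_tendsto_of_tendsto_of_le_of_le' hlow tendsto_const_nhds ?_ ?_
  · filter_upwards [hM0, hfgh] with x hMx hx
    rw [div_rpow_mul_div_rpow_one_sub _ _ hMx (hM x) ht0 ht1]
    exact ENNReal.div_le_div_right hx _
  · filter_upwards [hhM] with x hx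
    exact (ENNReal.div_le_div_right hx _).trans ENNReal.div_self_le_one

end ENNReal

theorem stmt2_general {X : Type*} [NormedAddCommGroup X] [NormedSpace ℝ X]
    [MeasurableSpace X] [BorelSpace X]
    (μ : Measure X) [IsProbabilityMeasure μ]
    (hconv : ∀ (A B : Set X), MeasurableSet A → MeasurableSet B →
      ∀ t : ℝ, 0 ≤ t → t ≤ 1 →
      μ A ^ t * μ B ^ (1 - t) ≤ μ (t • A + (1 - t) • B))
    (uhat vhat : X)
    (hu : Tendsto (fun ε : ℝ => μ (ball uhat ε) / (⨆ u : X, μ (ball u ε)))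
      (𝓝[>] 0) (𝓝 1))
    (hv : Tendsto (fun ε : ℝ => μ (ball vhat ε) / (⨆ u : X, μ (ball u ε)))
      (𝓝[>] 0) (𝓝 1))
    (t : ℝ) (ht0 : 0 ≤ t) (ht1 : t ≤ 1) :
    Tendsto (fun ε : ℝ =>
        μ (ball ((1 - t) • uhat + t • vhat) ε) / (⨆ u : X, μ (ball u ε)))
      (𝓝[>] 0) (𝓝 1) := by
  refine ENNReal.tendsto_div_of_rpow_mul_rpow_le ht0 ht1
    (fun ε => ne_top_of_le_ne_top ENNReal.one_ne_top (iSup_le fun _ => prob_le_one)) hv hu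
    (Eventually.of_forall fun ε => ?_)
    (Eventually.of_forall fun ε => le_iSup (fun u => μ (ball u ε)) _)
  refine (hconv _ _ measurableSet_ball measurableSet_ball t ht0 ht1).trans (measure_mono ?_)
  rw [add_comm ((1 - t) • uhat)]
  exact smul_ball_add_smul_ball_subset vhat uhat ε ht0 (sub_nonneg.2 ht1) (add_sub_cancel t 1)

/-- Proposition 3.6(1): for a convex measure, a convex combination of MAP estimates
is again a MAP estimate. -/
theorem stmt2 {X : Type*} [NormedAddCommGroup X] [NormedSpace ℝ X] [CompleteSpace X]
    [TopologicalSpace.SeparableSpace X] [MeasurableSpace X] [BorelSpace X]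
    (μ : Measure X) [IsProbabilityMeasure μ]
    (hconv : ∀ (A B : Set X), MeasurableSet A → MeasurableSet B →
      ∀ t : ℝ, 0 ≤ t → t ≤ 1 →
      μ A ^ t * μ B ^ (1 - t) ≤ μ (t • A + (1 - t) • B))
    (uhat vhat : X)
    (hu : Tendsto (fun ε : ℝ => μ (ball uhat ε) / (⨆ u : X, μ (ball u ε)))
      (𝓝[>] 0) (𝓝 1))
    (hv : Tendsto (fun ε : ℝ => μ (ball vhat ε) / (⨆ u : X, μ (ball u ε)))
      (𝓝[>] 0) (𝓝 1))
    (t : ℝ) (ht0 : 0 ≤ t) (ht1 : t ≤ 1) :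
    Tendsto (fun ε : ℝ =>
        μ (ball ((1 - t) • uhat + t • vhat) ε) / (⨆ u : X, μ (ball u ε)))
      (𝓝[>] 0) (𝓝 1) :=
  stmt2_general μ hconv uhat vhat hu hv t ht0 ht1
end

section
/- Let X be a separable Banach space, μ a convex Borel probability measure on X with full support, and E a linear subspace of X. Let û, v̂ ∈ X be such that for every h ∈ E the limits r_h(û) = lim_{ε→0} μ(B_ε(û − h))/μ(B_ε(û)) and r_h(v̂) = lim_{ε→0} μ(B_ε(v̂ − h))/μ(B_ε(v̂)) exist and satisfy r_h(û) ≤ 1 and r_h(v̂) ≤ 1. Assume v̂ − û ∈ E and let t ∈ [0,1], w = (1−t)û + t v̂. Then for every h ∈ E, limsup_{ε→0} μ(B_ε(w − h))/μ(B_ε(w)) ≤ 1. -/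
/-!
Write `ρ ε x = μ (B_ε(x))`. The hypothesis at `v̂` with `h = v̂ - û` says `ρ ε û / ρ ε v̂ → r ≤ 1`,
so `ρ ε v̂ / ρ ε û → r⁻¹ ≥ 1`. Log-concavity applied to the balls around `v̂` and `û` gives
`ρ ε w ≥ (ρ ε v̂)^t (ρ ε û)^(1-t)`, i.e. `ρ ε w / ρ ε û ≥ (ρ ε v̂ / ρ ε û)^t`. Since
`w = û - t (û - v̂)` and `w - h = û - (h + t (û - v̂))` with both shifts in `E`, the hypothesis at `û`
makes `ρ ε w / ρ ε û → b` and `ρ ε (w - h) / ρ ε û → a ≤ 1`, where now `b ≥ 1`. Dividing,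
`ρ ε (w - h) / ρ ε w → a / b ≤ 1`.
-/

open MeasureTheory Metric Filter Topology Pointwise
open scoped ENNReal

namespace ENNReal

variable {α : Type*} {l : Filter α}

lemma div_rpow_le_div_of_rpow_mul_rpow_le {x a c : ℝ≥0∞} {t : ℝ} (ht : 0 ≤ t) (ha₀ : a ≠ 0)
    (ha : a ≠ ∞) (h : x ^ t * a ^ (1 - t) ≤ c) : (x / a) ^ t ≤ c / a := by
  have hpow : a ^ (1 - t) / a = (a ^ t)⁻¹ := by
    conv_lhs => enter [2]; rw [← ENNReal.rpow_one a]
    rw [← ENNReal.rpow_sub _ _ ha₀ ha, ← ENNReal.rpow_neg]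
    ring_nf
  calc (x / a) ^ t = x ^ t * a ^ (1 - t) / a := by
        rw [ENNReal.div_rpow_of_nonneg _ _ ht, mul_div_assoc, hpow, div_eq_mul_inv]
    _ ≤ c / a := ENNReal.div_le_div_right h a

lemma Tendsto.div_swap {f g : α → ℝ≥0∞} {r : ℝ≥0∞}
    (h : Tendsto (fun x => g x / f x) l (𝓝 r)) (hf : ∀ᶠ x in l, f x ≠ 0 ∧ f x ≠ ∞) :
    Tendsto (fun x => f x / g x) l (𝓝 r⁻¹) := by
  refine (tendsto_inv_iff.2 h).congr' ?_
  filter_upwards [hf] with x hx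
  exact ENNReal.inv_div (Or.inl hx.2) (Or.inl hx.1)

lemma Tendsto.div_of_div_right {f g k : α → ℝ≥0∞} {a b : ℝ≥0∞}
    (hf : Tendsto (fun x => f x / k x) l (𝓝 a)) (hg : Tendsto (fun x => g x / k x) l (𝓝 b))
    (hk : ∀ᶠ x in l, k x ≠ 0 ∧ k x ≠ ∞) (ha : a ≠ ∞) (hb : b ≠ 0) :
    Tendsto (fun x => f x / g x) l (𝓝 (a / b)) := by
  refine (ENNReal.Tendsto.div hf (Or.inr hb) hg (Or.inr ha)).congr' ?_
  filter_upwards [hk] with x hx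
  rw [div_eq_mul_inv (f x), div_eq_mul_inv (g x), ENNReal.mul_div_mul_right _ _
    (ENNReal.inv_ne_zero.2 hx.2) (ENNReal.inv_ne_top.2 hx.1)]

end ENNReal

lemma smul_ball_add_smul_ball_subset_s3 {X : Type*} [SeminormedAddCommGroup X] [NormedSpace ℝ X]
    (x y : X) (ε : ℝ) {t : ℝ} (ht₀ : 0 ≤ t) (ht₁ : t ≤ 1) :
    t • ball x ε + (1 - t) • ball y ε ⊆ ball (t • x + (1 - t) • y) ε := by
  rintro _ ⟨_, ⟨p, hp, rfl⟩, _, ⟨q, hq, rfl⟩, rfl⟩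
  have h := convex_ball (0 : X) ε (mem_ball_zero_iff.2 (mem_ball_iff_norm.1 hp))
    (mem_ball_zero_iff.2 (mem_ball_iff_norm.1 hq)) ht₀ (sub_nonneg.2 ht₁) (add_sub_cancel t 1)
  rw [mem_ball_zero_iff] at h
  rwa [mem_ball_iff_norm, show t • p + (1 - t) • q - (t • x + (1 - t) • y)
    = t • (p - x) + (1 - t) • (q - y) by module]

namespace MeasureTheory.Measure

variable {X : Type*} [MeasurableSpace X]

-- Borell's convex measures (log-concave in the usual terminology).
def IsLogConcave [AddCommGroup X] [Module ℝ X] (μ : Measure X) : Prop :=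
  ∀ (A B : Set X), MeasurableSet A → MeasurableSet B → ∀ t : ℝ, 0 ≤ t → t ≤ 1 →
    μ A ^ t * μ B ^ (1 - t) ≤ μ (t • A + (1 - t) • B)

variable [SeminormedAddCommGroup X] {μ : Measure X}

lemma eventually_measure_ball_ne_zero_ne_top [IsFiniteMeasure μ]
    (hfull : ∀ u : X, ∀ ε : ℝ, 0 < ε → 0 < μ (ball u ε)) (x : X) :
    ∀ᶠ ε in 𝓝[>] (0 : ℝ), μ (ball x ε) ≠ 0 ∧ μ (ball x ε) ≠ ∞ :=
  eventually_mem_nhdsWithin.mono fun ε hε => ⟨(hfull x ε hε).ne', measure_ne_top μ _⟩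

variable [NormedSpace ℝ X] [OpensMeasurableSpace X]

lemma IsLogConcave.rpow_mul_rpow_le_measure_ball (hμ : μ.IsLogConcave) (x y : X) (ε : ℝ)
    {t : ℝ} (ht₀ : 0 ≤ t) (ht₁ : t ≤ 1) :
    μ (ball x ε) ^ t * μ (ball y ε) ^ (1 - t) ≤ μ (ball (t • x + (1 - t) • y) ε) :=
  (hμ _ _ measurableSet_ball measurableSet_ball t ht₀ ht₁).trans
    (measure_mono (smul_ball_add_smul_ball_subset_s3 x y ε ht₀ ht₁))

lemma IsLogConcave.one_le_of_tendsto_measure_ball_div [IsFiniteMeasure μ] (hμ : μ.IsLogConcave)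
    (hfull : ∀ u : X, ∀ ε : ℝ, 0 < ε → 0 < μ (ball u ε)) {u v : X} {t : ℝ} (ht₀ : 0 ≤ t)
    (ht₁ : t ≤ 1) {r b : ℝ≥0∞} (hr₁ : r ≤ 1)
    (hr : Tendsto (fun ε : ℝ => μ (ball u ε) / μ (ball v ε)) (𝓝[>] 0) (𝓝 r))
    (hb : Tendsto (fun ε : ℝ => μ (ball (t • v + (1 - t) • u) ε) / μ (ball u ε)) (𝓝[>] 0)
      (𝓝 b)) :
    1 ≤ b := by
  have hvu : Tendsto (fun ε : ℝ => μ (ball v ε) / μ (ball u ε)) (𝓝[>] 0) (𝓝 r⁻¹) :=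
    ENNReal.Tendsto.div_swap hr (eventually_measure_ball_ne_zero_ne_top hfull v)
  have hle : ∀ᶠ ε in 𝓝[>] (0 : ℝ), (μ (ball v ε) / μ (ball u ε)) ^ t
      ≤ μ (ball (t • v + (1 - t) • u) ε) / μ (ball u ε) :=
    (eventually_measure_ball_ne_zero_ne_top hfull u).mono fun ε hε =>
      ENNReal.div_rpow_le_div_of_rpow_mul_rpow_le ht₀ hε.1 hε.2
        (hμ.rpow_mul_rpow_le_measure_ball v u ε ht₀ ht₁)
  calc 1 = (1 : ℝ≥0∞) ^ t := (ENNReal.one_rpow t).symm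
    _ ≤ r⁻¹ ^ t := ENNReal.rpow_le_rpow (ENNReal.one_le_inv.2 hr₁) ht₀
    _ ≤ b := le_of_tendsto_of_tendsto (hvu.ennrpow_const t) hb hle

end MeasureTheory.Measure

open MeasureTheory.Measure in
theorem stmt3_general {X : Type*} [NormedAddCommGroup X] [NormedSpace ℝ X]
    [MeasurableSpace X] [BorelSpace X]
    (μ : Measure X) [IsProbabilityMeasure μ]
    (hconv : ∀ (A B : Set X), MeasurableSet A → MeasurableSet B →
      ∀ t : ℝ, 0 ≤ t → t ≤ 1 →
      μ A ^ t * μ B ^ (1 - t) ≤ μ (t • A + (1 - t) • B))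
    (hfull : ∀ u : X, ∀ ε : ℝ, 0 < ε → 0 < μ (ball u ε))
    (E : Submodule ℝ X) (uhat vhat : X)
    (hu : ∀ h ∈ E, ∃ r : ℝ≥0∞, r ≤ 1 ∧
      Tendsto (fun ε : ℝ => μ (ball (uhat - h) ε) / μ (ball uhat ε)) (𝓝[>] 0) (𝓝 r))
    (hv : ∀ h ∈ E, ∃ r : ℝ≥0∞, r ≤ 1 ∧
      Tendsto (fun ε : ℝ => μ (ball (vhat - h) ε) / μ (ball vhat ε)) (𝓝[>] 0) (𝓝 r))
    (hvu : vhat - uhat ∈ E)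
    (t : ℝ) (ht0 : 0 ≤ t) (ht1 : t ≤ 1)
    (w : X) (hw : w = (1 - t) • uhat + t • vhat) :
    ∀ h ∈ E,
      Filter.limsup (fun ε : ℝ => μ (ball (w - h) ε) / μ (ball w ε)) (𝓝[>] 0) ≤ 1 := by
  intro h hh
  subst hw
  have hshift : t • (uhat - vhat) ∈ E := E.smul_mem t (by simpa using E.neg_mem hvu)
  obtain ⟨r, hr₁, hr⟩ := hv (vhat - uhat) hvu
  obtain ⟨b, -, hb⟩ := hu _ hshift
  obtain ⟨a, ha₁, ha⟩ := hu _ (E.add_mem hh hshift)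
  rw [sub_sub_cancel] at hr
  rw [show uhat - t • (uhat - vhat) = t • vhat + (1 - t) • uhat by module] at hb
  rw [show uhat - (h + t • (uhat - vhat)) = (1 - t) • uhat + t • vhat - h by module] at ha
  have hb₁ : 1 ≤ b := IsLogConcave.one_le_of_tendsto_measure_ball_div hconv hfull ht0 ht1 hr₁ hr hb
  rw [add_comm] at hb
  have hlim := ENNReal.Tendsto.div_of_div_right ha hb
    (eventually_measure_ball_ne_zero_ne_top hfull uhat)
    (ne_top_of_le_ne_top ENNReal.one_ne_top ha₁) (zero_lt_one.trans_le hb₁).ne'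
  rw [hlim.limsup_eq]
  exact ENNReal.div_le_of_le_mul (by simpa using ha₁.trans hb₁)

/-- Proposition 3.6(2): a convex combination of weak MAP estimates differing by an
element of `E` is again a weak MAP estimate. -/
theorem stmt3 {X : Type*} [NormedAddCommGroup X] [NormedSpace ℝ X] [CompleteSpace X]
    [TopologicalSpace.SeparableSpace X] [MeasurableSpace X] [BorelSpace X]
    (μ : Measure X) [IsProbabilityMeasure μ]
    (hconv : ∀ (A B : Set X), MeasurableSet A → MeasurableSet B →
      ∀ t : ℝ, 0 ≤ t → t ≤ 1 →
      μ A ^ t * μ B ^ (1 - t) ≤ μ (t • A + (1 - t) • B))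
    (hfull : ∀ u : X, ∀ ε : ℝ, 0 < ε → 0 < μ (ball u ε))
    (E : Submodule ℝ X) (uhat vhat : X)
    (hu : ∀ h ∈ E, ∃ r : ℝ≥0∞, r ≤ 1 ∧
      Tendsto (fun ε : ℝ => μ (ball (uhat - h) ε) / μ (ball uhat ε)) (𝓝[>] 0) (𝓝 r))
    (hv : ∀ h ∈ E, ∃ r : ℝ≥0∞, r ≤ 1 ∧
      Tendsto (fun ε : ℝ => μ (ball (vhat - h) ε) / μ (ball vhat ε)) (𝓝[>] 0) (𝓝 r))
    (hvu : vhat - uhat ∈ E)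
    (t : ℝ) (ht0 : 0 ≤ t) (ht1 : t ≤ 1)
    (w : X) (hw : w = (1 - t) • uhat + t • vhat) :
    ∀ h ∈ E,
      Filter.limsup (fun ε : ℝ => μ (ball (w - h) ε) / μ (ball w ε)) (𝓝[>] 0) ≤ 1 :=
  stmt3_general μ hconv hfull E uhat vhat hu hv hvu t ht0 ht1 w hw
end

section
/- Let X be a separable Banach space, μ a Borel probability measure on X with full support, û ∈ X, h ∈ X, and β : X → ℝ a continuous function. Suppose that for every t ∈ ℝ the limit lim_{ε→0} μ(B_ε(û − t h))/μ(B_ε(û)) exists, equals exp(∫_0^t β(û − s h) ds), and is at most 1. Then β(û) = 0. -/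
/-!
The Onsager–Machlup functional `t ↦ ∫₀ᵗ β(û - s h) ds` is the logarithm of the small-ball
ratio, so the bound `ratio ≤ 1` says it is maximal at `t = 0`. By the fundamental theorem of
calculus its derivative there is `β(û)`, which must vanish at an interior maximum.
-/

open MeasureTheory Metric Filter Topology

theorem eq_zero_of_eventually_intervalIntegral_nonpos {f : ℝ → ℝ} (hf : Continuous f) (a : ℝ)
    (hle : ∀ᶠ t in 𝓝 a, ∫ s in a..t, f s ≤ 0) : f a = 0 := by
  have hmax : IsLocalMax (fun t => ∫ s in a..t, f s) a := by
    simpa [IsLocalMax, IsMaxFilter] using hle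
  exact hmax.hasDerivAt_eq_zero (hf.integral_hasStrictDerivAt a a).hasDerivAt

theorem stmt4_general {X : Type*} [NormedAddCommGroup X] [NormedSpace ℝ X]
    [MeasurableSpace X]
    (μ : Measure X)
    (uhat h : X) (β : X → ℝ) (hβ : Continuous β)
    (hlim : ∀ t : ℝ,
      Tendsto (fun ε : ℝ =>
          (μ (ball (uhat - t • h) ε)).toReal / (μ (ball uhat ε)).toReal)
        (𝓝[>] 0) (𝓝 (Real.exp (∫ s in (0:ℝ)..t, β (uhat - s • h)))) ∧
      Real.exp (∫ s in (0:ℝ)..t, β (uhat - s • h)) ≤ 1) :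
    β uhat = 0 := by
  have hβ_line : Continuous fun s : ℝ => β (uhat - s • h) := hβ.comp (by fun_prop)
  simpa using eq_zero_of_eventually_intervalIntegral_nonpos hβ_line 0
    (.of_forall fun t => Real.exp_le_one_iff.mp (hlim t).2)

/-- Theorem 3.7: at a weak MAP estimate, the continuous representative of the
logarithmic derivative vanishes. -/
theorem stmt4 {X : Type*} [NormedAddCommGroup X] [NormedSpace ℝ X] [CompleteSpace X]
    [TopologicalSpace.SeparableSpace X] [MeasurableSpace X] [BorelSpace X]
    (μ : Measure X) [IsProbabilityMeasure μ]
    (hfull : ∀ u : X, ∀ ε : ℝ, 0 < ε → 0 < μ (ball u ε))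
    (uhat h : X) (β : X → ℝ) (hβ : Continuous β)
    (hlim : ∀ t : ℝ,
      Tendsto (fun ε : ℝ =>
          (μ (ball (uhat - t • h) ε)).toReal / (μ (ball uhat ε)).toReal)
        (𝓝[>] 0) (𝓝 (Real.exp (∫ s in (0:ℝ)..t, β (uhat - s • h)))) ∧
      Real.exp (∫ s in (0:ℝ)..t, β (uhat - s • h)) ≤ 1) :
    β uhat = 0 :=
  stmt4_general μ uhat h β hβ hlim
end

section
/- Let X be a separable Banach space, λ a Borel probability measure on X, h ∈ X, and β_h ∈ L¹(λ) such that for every Borel set A ⊆ X: lim_{t→0} (λ(A + t h) − λ(A))/t = ∫_A β_h dλ. Let A_op : X → ℝ^M be a bounded linear map, m ∈ ℝ^M, f(u) = exp(−½|A_op u − m|²), G = ∫_X f dλ, and let μ be the probability measure with μ(A) = G^{−1} ∫_A f dλ. Then for every Borel set A ⊆ X: lim_{t→0} (μ(A + t h) − μ(A))/t = ∫_A (β_h(u) − ⟨A_op u − m, A_op h⟩_{ℝ^M}) dμ(u). -/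
/-!
`μ (A + t h) = G⁻¹ ∫ 1_A(u - t h) f(u) dλ(u)`; split `f(u) = f(u - t h) + (f(u) - f(u - t h))`.

The first part is `∫ (1_A f)(u - t h) dλ`. By the layer-cake formula its difference quotient is an
average over the levels `s` of the Fomin difference quotients of `λ` on the level sets
`{1_A f > s}`; by the mean value theorem each of these is bounded by `‖β_h‖_{L¹}`, so dominated
convergence and Fubini give the derivative `∫_A f β_h dλ`.

The second part, divided by `t`, is `∫ 1_A(u - t h) ∂_h f(u - t h) dλ` up to a term that tends to
`0` by dominated convergence; the main term tends to `∫_A ∂_h f dλ` because `t ↦ ∫ g(u - t h) dλ`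
is differentiable, hence continuous, for every bounded measurable `g`. For the Gaussian likelihood
`∂_h f(u) = -⟨A u - m, A h⟩ f(u)` is bounded and continuous, and dividing by `f` gives the
logarithmic derivative.
-/

open MeasureTheory Filter Topology RealInnerProductSpace Set

section LayerCake

variable {α : Type*} [MeasurableSpace α] {μ : Measure α}

theorem integral_Ioc_setIntegral_lt [SFinite μ] {g w : α → ℝ} (hg : Measurable g)
    {a b : ℝ} (hga : ∀ u, a ≤ g u) (hgb : ∀ u, g u ≤ b) (hw : Integrable w μ) :
    ∫ s in Ioc a b, ∫ u in {u | s < g u}, w u ∂μ = ∫ u, (g u - a) * w u ∂μ := by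
  have hS : MeasurableSet {p : ℝ × α | p.1 < g p.2} :=
    measurableSet_lt measurable_fst (hg.comp measurable_snd)
  have hprod : Integrable (Function.uncurry fun s u => {p : ℝ × α | p.1 < g p.2}.indicator
      (fun p => w p.2) (s, u)) ((volume.restrict (Ioc a b)).prod μ) :=
    (hw.comp_snd _).indicator hS
  calc ∫ s in Ioc a b, ∫ u in {u | s < g u}, w u ∂μ
      = ∫ s in Ioc a b, ∫ u, {p : ℝ × α | p.1 < g p.2}.indicator (fun p => w p.2) (s, u) ∂μ := by
        refine setIntegral_congr_fun measurableSet_Ioc fun s _ => ?_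
        rw [← integral_indicator (measurableSet_lt measurable_const hg)]
        rfl
    _ = ∫ u, (∫ s in Ioc a b, {p : ℝ × α | p.1 < g p.2}.indicator (fun p => w p.2) (s, u)) ∂μ :=
        integral_integral_swap hprod
    _ = ∫ u, (g u - a) * w u ∂μ := by
        refine integral_congr_ae (ae_of_all _ fun u => ?_)
        change ∫ s in Ioc a b, (Iio (g u)).indicator (fun _ => w u) s = _
        have hIoo : Ioc a b ∩ Iio (g u) = Ioo a (g u) := by
          ext s
          simp only [mem_inter_iff, mem_Ioc, mem_Iio, mem_Ioo]
          exact ⟨fun ⟨⟨h1, _⟩, h2⟩ => ⟨h1, h2⟩, fun ⟨h1, h2⟩ => ⟨⟨h1, h2.le.trans (hgb u)⟩, h2⟩⟩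
        rw [setIntegral_indicator measurableSet_Iio, hIoo, setIntegral_const, Real.volume_real_Ioo,
          max_eq_left (sub_nonneg.2 (hga u)), smul_eq_mul]

variable [IsFiniteMeasure μ]

theorem integral_eq_integral_Ioc_measureReal_lt {g : α → ℝ} (hg : Measurable g) {a b : ℝ}
    (hga : ∀ u, a ≤ g u) (hgb : ∀ u, g u ≤ b) :
    ∫ u, g u ∂μ = (∫ s in Ioc a b, μ.real {u | s < g u}) + a * μ.real univ := by
  have hg_int : Integrable g μ := Integrable.of_bound hg.aestronglyMeasurable (max |a| |b|)
    (ae_of_all _ fun u => abs_le_max_abs_abs (hga u) (hgb u))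
  have := integral_Ioc_setIntegral_lt (μ := μ) hg hga hgb (integrable_const 1)
  simp only [integral_const, smul_eq_mul, mul_one, measureReal_restrict_apply_univ,
    integral_sub hg_int (integrable_const a)] at this
  linarith

theorem Antitone.measurable_measureReal {S : ℝ → Set α} (hS : Antitone S) :
    Measurable fun s => μ.real (S s) :=
  Antitone.measurable fun _ _ hst => measureReal_mono (hS hst) (measure_ne_top μ _)

end LayerCake

section Translation

variable {X : Type*} [NormedAddCommGroup X] [NormedSpace ℝ X] {h : X} {f f' : X → ℝ}

theorem image_add_smul_eq_preimage (h : X) (t : ℝ) (A : Set X) :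
    (· + t • h) '' A = (· - t • h) ⁻¹' A := by
  simp_rw [image_add_right, sub_eq_add_neg]

theorem image_add_smul_image_add_smul (h : X) (s t : ℝ) (A : Set X) :
    (· + t • h) '' ((· + s • h) '' A) = (· + (s + t) • h) '' A := by
  simp_rw [image_image, add_smul, add_assoc]

theorem MeasurableSet.image_add_smul [MeasurableSpace X] [BorelSpace X] {A : Set X}
    (hA : MeasurableSet A) (h : X) (t : ℝ) : MeasurableSet ((· + t • h) '' A) := by
  rw [image_add_smul_eq_preimage]
  exact (continuous_sub_right _).measurable hA

theorem hasDerivAt_comp_add_smul (hf : ∀ u, HasDerivAt (fun s : ℝ => f (u + s • h)) (f' u) 0)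
    (u : X) (s : ℝ) : HasDerivAt (fun r : ℝ => f (u + r • h)) (f' (u + s • h)) s := by
  have := (neg_add_cancel s ▸ hf (u + s • h)).comp_const_add (-s) s
  simpa [add_assoc, ← add_smul] using this

theorem abs_slope_sub_le (hf : ∀ u, HasDerivAt (fun s : ℝ => f (u + s • h)) (f' u) 0) {K : ℝ}
    (hf'K : ∀ u, |f' u| ≤ K) (u : X) {t : ℝ} (ht : t ≠ 0) :
    |(f u - f (u - t • h)) / t - f' (u - t • h)| ≤ 2 * K := by
  have hmvt := convex_univ.norm_image_sub_le_of_norm_hasDerivWithin_le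
    (fun s _ => (hasDerivAt_comp_add_smul hf (u - t • h) s).hasDerivWithinAt)
    (fun s _ => hf'K _) (mem_univ 0) (mem_univ t)
  have hslope : |(f u - f (u - t • h)) / t| ≤ K := by
    rw [abs_div, div_le_iff₀ (abs_pos.2 ht)]
    simpa using hmvt
  linarith [(abs_sub _ _).trans (add_le_add hslope (hf'K (u - t • h)))]

theorem tendsto_slope_sub_comp_sub (hf : ∀ u, HasDerivAt (fun s : ℝ => f (u + s • h)) (f' u) 0)
    (hf' : Continuous f') (u : X) :
    Tendsto (fun t : ℝ => (f u - f (u - t • h)) / t - f' (u - t • h)) (𝓝[≠] 0) (𝓝 0) := by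
  have hneg : HasDerivAt (fun r : ℝ => f (u - r • h)) (-f' u) 0 := by
    have := (neg_zero (G := ℝ) ▸ hf u).comp (0 : ℝ) (hasDerivAt_neg (0 : ℝ))
    simpa [Function.comp_def, neg_smul, ← sub_eq_add_neg] using this
  have hcont : Tendsto (fun t : ℝ => f' (u - t • h)) (𝓝[≠] 0) (𝓝 (f' u)) := by
    have : Continuous fun t : ℝ => f' (u - t • h) := by fun_prop
    simpa using (this.tendsto 0).mono_left nhdsWithin_le_nhds
  have := hneg.tendsto_slope_zero.neg.sub hcont
  rw [neg_neg, sub_self] at this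
  refine this.congr fun t => ?_
  simp only [zero_add, zero_smul, sub_zero, smul_eq_mul]
  ring

end Translation

section Fomin

variable {X : Type*} [NormedAddCommGroup X] [NormedSpace ℝ X] [MeasurableSpace X]

/-- `μ` is Fomin differentiable along `h` with logarithmic derivative `β`:
`d_h μ (A) = ∫_A β dμ` for every measurable `A`. -/
def HasFominLogDeriv (μ : Measure X) (h : X) (β : X → ℝ) : Prop :=
  ∀ A : Set X, MeasurableSet A →
    Tendsto (fun t : ℝ => ((μ ((· + t • h) '' A)).toReal - (μ A).toReal) / t)
      (𝓝[≠] 0) (𝓝 (∫ u in A, β u ∂μ))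

variable {μ : Measure X} {h : X} {β : X → ℝ}

theorem HasFominLogDeriv.integral_eq_zero (hμ : HasFominLogDeriv μ h β) : ∫ u, β u ∂μ = 0 := by
  have hlim := hμ univ MeasurableSet.univ
  simp only [image_add_right, preimage_univ, sub_self, zero_div, Measure.restrict_univ] at hlim
  exact tendsto_nhds_unique hlim tendsto_const_nhds

variable [BorelSpace X]

theorem HasFominLogDeriv.hasDerivAt_measureReal (hμ : HasFominLogDeriv μ h β) {A : Set X}
    (hA : MeasurableSet A) (s : ℝ) :
    HasDerivAt (fun t => μ.real ((· + t • h) '' A)) (∫ u in (· + s • h) '' A, β u ∂μ) s := by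
  rw [hasDerivAt_iff_tendsto_slope_zero]
  refine (hμ _ (hA.image_add_smul h s)).congr fun t => ?_
  rw [image_add_smul_image_add_smul, smul_eq_mul, div_eq_inv_mul, measureReal_def,
    measureReal_def]

theorem HasFominLogDeriv.abs_measureReal_image_sub_le (hμ : HasFominLogDeriv μ h β)
    (hβ : Integrable β μ) {A : Set X} (hA : MeasurableSet A) (t : ℝ) :
    |μ.real ((· + t • h) '' A) - μ.real A| ≤ (∫ u, |β u| ∂μ) * |t| := by
  have key := convex_univ.norm_image_sub_le_of_norm_hasDerivWithin_le
    (fun s _ => (hμ.hasDerivAt_measureReal hA s).hasDerivWithinAt)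
    (fun s _ => (norm_integral_le_integral_norm _).trans
      (setIntegral_le_integral hβ.norm (ae_of_all _ fun _ => norm_nonneg _)))
    (mem_univ 0) (mem_univ t)
  simpa using key

variable [IsFiniteMeasure μ]

theorem HasFominLogDeriv.tendsto_integral_Ioc_slope_measureReal (hμ : HasFominLogDeriv μ h β)
    (hβ : Integrable β μ) {S : ℝ → Set X} (hS : ∀ s, MeasurableSet (S s)) (hS_anti : Antitone S)
    (a b : ℝ) :
    Tendsto (fun t : ℝ => ∫ s in Ioc a b, t⁻¹ * (μ.real ((· + t • h) '' S s) - μ.real (S s)))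
      (𝓝[≠] 0) (𝓝 (∫ s in Ioc a b, ∫ u in S s, β u ∂μ)) := by
  refine tendsto_integral_filter_of_dominated_convergence (fun _ => ∫ u, |β u| ∂μ)
    (Eventually.of_forall fun t => ?_) ?_ (integrable_const _)
    (ae_of_all _ fun s => by simpa [div_eq_inv_mul, measureReal_def] using hμ (S s) (hS s))
  · have hS_anti_t : Antitone fun s => (· + t • h) '' S s := fun _ _ hst => image_mono (hS_anti hst)
    exact ((hS_anti_t.measurable_measureReal.sub hS_anti.measurable_measureReal).const_mul
      _).aestronglyMeasurable
  · filter_upwards [self_mem_nhdsWithin] with t (ht : t ≠ 0)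
    refine ae_of_all _ fun s => ?_
    rw [norm_mul, norm_inv, inv_mul_le_iff₀ (norm_pos_iff.2 ht)]
    simpa [mul_comm] using hμ.abs_measureReal_image_sub_le hβ (hS s) t

theorem HasFominLogDeriv.hasDerivAt_integral_comp_sub (hμ : HasFominLogDeriv μ h β)
    (hβ : Integrable β μ) {g : X → ℝ} (hg : Measurable g) {c : ℝ} (hgc : ∀ u, |g u| ≤ c) :
    HasDerivAt (fun t : ℝ => ∫ u, g (u - t • h) ∂μ) (∫ u, g u * β u ∂μ) 0 := by
  set S : ℝ → Set X := fun s => {u | s < g u}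
  have hS_anti : Antitone S := fun _ _ hst _ hu => hst.trans_lt hu
  have hlayer : ∀ t : ℝ, ∫ u, g (u - t • h) ∂μ
      = (∫ s in Ioc (-c) c, μ.real ((· + t • h) '' S s)) + -c * μ.real univ := by
    intro t
    simp_rw [image_add_smul_eq_preimage]
    exact integral_eq_integral_Ioc_measureReal_lt (hg.comp (measurable_sub_const _))
      (fun u => neg_le_of_abs_le (hgc _)) (fun u => le_of_abs_le (hgc _))
  have hint : ∀ t : ℝ, Integrable (fun s => μ.real ((· + t • h) '' S s))
      (volume.restrict (Ioc (-c) c)) := fun t =>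
    Integrable.of_bound (Antitone.measurable_measureReal fun _ _ hst =>
      image_mono (hS_anti hst)).aestronglyMeasurable (μ.real univ)
      (ae_of_all _ fun s => (Real.norm_of_nonneg measureReal_nonneg).trans_le
        (measureReal_mono (subset_univ _) (measure_ne_top μ _)))
  -- the constant level `-c` contributes `c ∫ β dμ = 0`
  have hval : ∫ s in Ioc (-c) c, ∫ u in S s, β u ∂μ = ∫ u, g u * β u ∂μ := by
    rw [integral_Ioc_setIntegral_lt hg (fun u => neg_le_of_abs_le (hgc _))
      (fun u => le_of_abs_le (hgc _)) hβ]
    simp only [sub_neg_eq_add, add_mul, integral_add (hβ.bdd_mul hg.aestronglyMeasurable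
      (ae_of_all _ hgc)) (hβ.const_mul c), integral_const_mul, hμ.integral_eq_zero, mul_zero,
      add_zero]
  rw [hasDerivAt_iff_tendsto_slope_zero, ← hval]
  refine (hμ.tendsto_integral_Ioc_slope_measureReal hβ (fun s => measurableSet_lt
    measurable_const hg) hS_anti (-c) c).congr fun t => ?_
  have hS0 : ∀ s, (· + (0 : ℝ) • h) '' S s = S s := fun s => by simp
  rw [hlayer, zero_add, hlayer, integral_const_mul, smul_eq_mul, add_sub_add_right_eq_sub,
    ← integral_sub (hint t) (hint 0)]
  simp only [hS0, S]

variable {f f' : X → ℝ}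

theorem tendsto_integral_indicator_mul_slope_sub (hf_meas : Measurable f)
    (hf : ∀ u, HasDerivAt (fun s : ℝ => f (u + s • h)) (f' u) 0) (hf'_cont : Continuous f')
    {K : ℝ} (hf'K : ∀ u, |f' u| ≤ K) {A : Set X} (hA : MeasurableSet A) :
    Tendsto (fun t : ℝ =>
      ∫ u, A.indicator 1 (u - t • h) * ((f u - f (u - t • h)) / t - f' (u - t • h)) ∂μ)
      (𝓝[≠] 0) (𝓝 0) := by
  set r : ℝ → X → ℝ := fun t u =>
    A.indicator 1 (u - t • h) * ((f u - f (u - t • h)) / t - f' (u - t • h))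
  have hle : ∀ t u, |r t u| ≤ |(f u - f (u - t • h)) / t - f' (u - t • h)| := fun t u => by
    by_cases hu : u - t • h ∈ A <;> simp [r, hu]
  have key := tendsto_integral_filter_of_dominated_convergence (μ := μ) (l := 𝓝[≠] (0 : ℝ))
    (F := r) (f := fun _ => 0) (fun _ => 2 * K) (Eventually.of_forall fun t =>
      Measurable.aestronglyMeasurable (by fun_prop (disch := exact hA)))
    (eventually_nhdsWithin_of_forall fun t ht =>
      ae_of_all _ fun u => (hle t u).trans (abs_slope_sub_le hf hf'K u ht))
    (integrable_const _) (ae_of_all _ fun u => squeeze_zero_norm (hle · u)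
      (by simpa using (tendsto_slope_sub_comp_sub hf hf'_cont u).abs))
  rwa [integral_zero] at key

theorem HasFominLogDeriv.hasDerivAt_integral_indicator_mul_sub
    (hμ : HasFominLogDeriv μ h β) (hβ : Integrable β μ) (hf_meas : Measurable f)
    (hf : ∀ u, HasDerivAt (fun s : ℝ => f (u + s • h)) (f' u) 0) (hf'_cont : Continuous f')
    {K : ℝ} (hf'K : ∀ u, |f' u| ≤ K) {A : Set X} (hA : MeasurableSet A) :
    HasDerivAt (fun t : ℝ => ∫ u, A.indicator 1 (u - t • h) * (f u - f (u - t • h)) ∂μ)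
      (∫ u in A, f' u ∂μ) 0 := by
  set r : ℝ → X → ℝ := fun t u =>
    A.indicator 1 (u - t • h) * ((f u - f (u - t • h)) / t - f' (u - t • h))
  have hrem : Tendsto (fun t => ∫ u, r t u ∂μ) (𝓝[≠] 0) (𝓝 0) :=
    tendsto_integral_indicator_mul_slope_sub hf_meas hf hf'_cont hf'K hA
  have hf'A_meas : Measurable (A.indicator f') := hf'_cont.measurable.indicator hA
  have hf'A_le : ∀ u, |A.indicator f' u| ≤ K := fun u =>
    (norm_indicator_le_norm_self f' u).trans (hf'K u)
  have hcont : Tendsto (fun t : ℝ => ∫ u, A.indicator f' (u - t • h) ∂μ) (𝓝[≠] 0)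
      (𝓝 (∫ u in A, f' u ∂μ)) := by
    have := (hμ.hasDerivAt_integral_comp_sub hβ hf'A_meas hf'A_le).continuousAt
    simpa [integral_indicator hA] using this.tendsto.mono_left nhdsWithin_le_nhds
  -- `t⁻¹ 1_A(u - t h) (f u - f (u - t h)) = (1_A f')(u - t h) + r t u`
  rw [hasDerivAt_iff_tendsto_slope_zero, ← add_zero (∫ u in A, f' u ∂μ)]
  refine (hcont.add hrem).congr' ?_
  filter_upwards [self_mem_nhdsWithin] with t (ht : t ≠ 0)
  have hI₁ : Integrable (fun u => A.indicator f' (u - t • h)) μ :=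
    Integrable.of_bound (hf'A_meas.comp (measurable_sub_const _)).aestronglyMeasurable K
      (ae_of_all _ fun u => hf'A_le _)
  have hI₂ : Integrable (r t) μ := by
    refine Integrable.of_bound (Measurable.aestronglyMeasurable (by fun_prop (disch := exact hA)))
      (2 * K) (ae_of_all _ fun u => ?_)
    by_cases hu : u - t • h ∈ A
    · simpa [r, hu] using abs_slope_sub_le hf hf'K u ht
    · simpa [r, hu] using mul_nonneg zero_le_two ((abs_nonneg _).trans (hf'K u))
  simp only [zero_add, zero_smul, sub_zero, sub_self, mul_zero, integral_zero, smul_eq_mul]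
  rw [← integral_add hI₁ hI₂, ← integral_const_mul]
  refine integral_congr_ae (ae_of_all _ fun u => ?_)
  by_cases hu : u - t • h ∈ A
  · simp only [r, indicator_of_mem hu, Pi.one_apply, one_mul]
    field_simp
    ring
  · simp [r, hu]

theorem HasFominLogDeriv.hasDerivAt_setIntegral_image (hμ : HasFominLogDeriv μ h β)
    (hβ : Integrable β μ) (hf_meas : Measurable f) {C : ℝ} (hfC : ∀ u, |f u| ≤ C)
    (hf : ∀ u, HasDerivAt (fun s : ℝ => f (u + s • h)) (f' u) 0) (hf'_cont : Continuous f')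
    {K : ℝ} (hf'K : ∀ u, |f' u| ≤ K) {A : Set X} (hA : MeasurableSet A) :
    HasDerivAt (fun t : ℝ => ∫ u in (· + t • h) '' A, f u ∂μ)
      (∫ u in A, (f u * β u + f' u) ∂μ) 0 := by
  have hP := hμ.hasDerivAt_integral_comp_sub hβ (hf_meas.indicator hA)
    fun u => le_trans (norm_indicator_le_norm_self f u) (hfC u)
  have hE := hμ.hasDerivAt_integral_indicator_mul_sub hβ hf_meas hf hf'_cont hf'K hA
  have hf'_int : Integrable f' μ :=
    Integrable.of_bound hf'_cont.measurable.aestronglyMeasurable K (ae_of_all _ hf'K)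
  have hval : ∫ u in A, (f u * β u + f' u) ∂μ
      = ∫ u, A.indicator f u * β u ∂μ + ∫ u in A, f' u ∂μ := by
    rw [integral_add (hβ.bdd_mul hf_meas.aestronglyMeasurable (ae_of_all _ hfC)).integrableOn
      hf'_int.integrableOn, ← integral_indicator hA]
    simp only [indicator_mul_left]
  rw [hval]
  refine (hP.add hE).congr_of_eventuallyEq (Eventually.of_forall fun t => ?_)
  have hI₁ : Integrable (fun u => A.indicator f (u - t • h)) μ :=
    Integrable.of_bound ((hf_meas.indicator hA).comp (measurable_sub_const _)).aestronglyMeasurable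
      C (ae_of_all _ fun u => le_trans (norm_indicator_le_norm_self f _) (hfC _))
  have hI₂ : Integrable (fun u => A.indicator 1 (u - t • h) * (f u - f (u - t • h))) μ :=
    Integrable.of_bound (Measurable.aestronglyMeasurable (by fun_prop (disch := exact hA))) (2 * C)
      (ae_of_all _ fun u => by
        by_cases hu : u - t • h ∈ A
        · simpa [hu, two_mul] using (abs_sub _ _).trans (add_le_add (hfC u) (hfC (u - t • h)))
        · simpa [hu] using (abs_nonneg _).trans (hfC u))
  rw [Pi.add_apply, ← integral_add hI₁ hI₂]
  change ∫ u in (· + t • h) '' A, f u ∂μ = _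
  rw [← integral_indicator (hA.image_add_smul h t), image_add_smul_eq_preimage]
  refine integral_congr_ae (ae_of_all _ fun u => ?_)
  by_cases hu : u - t • h ∈ A <;> simp [hu]

theorem HasFominLogDeriv.withDensity (hμ : HasFominLogDeriv μ h β) (hβ : Integrable β μ)
    {ρ ρ' : X → ℝ} (hρ_meas : Measurable ρ) (hρ_pos : ∀ u, 0 < ρ u) {C : ℝ}
    (hρC : ∀ u, ρ u ≤ C) (hρ : ∀ u, HasDerivAt (fun s : ℝ => ρ (u + s • h)) (ρ' u) 0)
    (hρ'_cont : Continuous ρ') {K : ℝ} (hρ'K : ∀ u, |ρ' u| ≤ K) :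
    HasFominLogDeriv (μ.withDensity fun u => ENNReal.ofReal (ρ u)) h
      (fun u => β u + ρ' u / ρ u) := by
  have hρ_int : Integrable ρ μ :=
    Integrable.of_bound hρ_meas.aestronglyMeasurable C
      (ae_of_all _ fun u => (abs_of_pos (hρ_pos u)).trans_le (hρC u))
  have hreal : ∀ B, MeasurableSet B →
      ((μ.withDensity fun u => ENNReal.ofReal (ρ u)) B).toReal = ∫ u in B, ρ u ∂μ := by
    intro B hB
    rw [withDensity_apply _ hB, ← ofReal_integral_eq_lintegral_ofReal hρ_int.integrableOn
      (ae_of_all _ fun u => (hρ_pos u).le), ENNReal.toReal_ofReal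
      (setIntegral_nonneg hB fun u _ => (hρ_pos u).le)]
  intro A hA
  have hD := hμ.hasDerivAt_setIntegral_image hβ hρ_meas
    (fun u => (abs_of_pos (hρ_pos u)).trans_le (hρC u)) hρ hρ'_cont hρ'K hA
  have hval : ∫ u in A, (β u + ρ' u / ρ u) ∂(μ.withDensity fun u => ENNReal.ofReal (ρ u))
      = ∫ u in A, (ρ u * β u + ρ' u) ∂μ := by
    rw [setIntegral_withDensity_eq_setIntegral_toReal_smul hρ_meas.ennreal_ofReal
      (ae_of_all _ fun _ => ENNReal.ofReal_lt_top) _ hA]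
    refine setIntegral_congr_fun hA fun u _ => ?_
    rw [ENNReal.toReal_ofReal (hρ_pos u).le, smul_eq_mul]
    field_simp [(hρ_pos u).ne']
  rw [hval]
  refine hD.tendsto_slope_zero.congr fun t => ?_
  rw [hreal _ (hA.image_add_smul h t), hreal _ hA]
  simp [div_eq_inv_mul]

end Fomin

section GaussianLikelihood

open Real

variable {X F : Type*} [NormedAddCommGroup X] [NormedSpace ℝ X] [NormedAddCommGroup F]
  [InnerProductSpace ℝ F]

theorem mul_exp_neg_half_sq_le_one (x : ℝ) : x * exp (-(1 / 2) * x ^ 2) ≤ 1 :=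
  calc x * exp (-(1 / 2) * x ^ 2)
      ≤ exp (1 / 2 * x ^ 2) * exp (-(1 / 2) * x ^ 2) :=
        mul_le_mul_of_nonneg_right (by nlinarith [add_one_le_exp (1 / 2 * x ^ 2)])
          (exp_pos _).le
    _ = 1 := by rw [← exp_add]; simp

theorem abs_inner_mul_exp_neg_half_norm_sq_le (a b : F) :
    |⟪a, b⟫ * exp (-(1 / 2) * ‖a‖ ^ 2)| ≤ ‖b‖ := by
  rw [abs_mul, abs_of_pos (exp_pos _)]
  calc |⟪a, b⟫| * exp (-(1 / 2) * ‖a‖ ^ 2)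
      ≤ ‖a‖ * ‖b‖ * exp (-(1 / 2) * ‖a‖ ^ 2) :=
        mul_le_mul_of_nonneg_right (abs_real_inner_le_norm a b) (exp_pos _).le
    _ = ‖b‖ * (‖a‖ * exp (-(1 / 2) * ‖a‖ ^ 2)) := by ring
    _ ≤ ‖b‖ := mul_le_of_le_one_right (norm_nonneg b) (mul_exp_neg_half_sq_le_one _)

theorem hasDerivAt_exp_neg_half_norm_sq_comp_add_smul (T : X →L[ℝ] F) (m : F) (u h : X) :
    HasDerivAt (fun s : ℝ => exp (-(1 / 2) * ‖T (u + s • h) - m‖ ^ 2))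
      (-⟪T u - m, T h⟫ * exp (-(1 / 2) * ‖T u - m‖ ^ 2)) 0 := by
  have hline : HasDerivAt (fun s : ℝ => T (u + s • h) - m) (T h) 0 := by
    simp only [map_add, map_smul]
    simpa using (((hasDerivAt_id (0 : ℝ)).smul_const (T h)).const_add (T u)).sub_const m
  convert (hline.norm_sq.const_mul (-(1 / 2))).exp using 1
  simp only [zero_smul, add_zero]
  ring

variable [MeasurableSpace X] [BorelSpace X] {μ : Measure X} [IsFiniteMeasure μ] {h : X}
  {β : X → ℝ}

theorem HasFominLogDeriv.withDensity_exp_neg_half_norm_sq (hμ : HasFominLogDeriv μ h β)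
    (hβ : Integrable β μ) (T : X →L[ℝ] F) (m : F) {c : ℝ} (hc : 0 < c) :
    HasFominLogDeriv (μ.withDensity fun u => ENNReal.ofReal (c * exp (-(1 / 2) * ‖T u - m‖ ^ 2)))
      h (fun u => β u - ⟪T u - m, T h⟫) := by
  have hexp_pos : ∀ u, 0 < exp (-(1 / 2) * ‖T u - m‖ ^ 2) := fun u => exp_pos _
  have key := hμ.withDensity hβ (Continuous.measurable (by fun_prop))
    (fun u => mul_pos hc (hexp_pos u)) (C := c)
    (fun u => mul_le_of_le_one_right hc.le
      (exp_le_one_iff.2 (by nlinarith [sq_nonneg ‖T u - m‖])))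
    (fun u => (hasDerivAt_exp_neg_half_norm_sq_comp_add_smul T m u h).const_mul c)
    (by fun_prop) (K := c * ‖T h‖)
    (fun u => by
      rw [abs_mul, abs_of_pos hc, neg_mul, abs_neg]
      exact mul_le_mul_of_nonneg_left (abs_inner_mul_exp_neg_half_norm_sq_le _ _) hc.le)
  convert key using 2 with u
  field_simp [hc.ne', (hexp_pos u).ne']
  ring

end GaussianLikelihood

theorem stmt6_general {X : Type*} [NormedAddCommGroup X] [NormedSpace ℝ X]
    [MeasurableSpace X] [BorelSpace X]
    {M : ℕ} (lam : Measure X) [IsProbabilityMeasure lam]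
    (h : X) (βh : X → ℝ) (hβh : Integrable βh lam)
    (hFomin : ∀ A : Set X, MeasurableSet A →
      Tendsto (fun t : ℝ => ((lam ((· + t • h) '' A)).toReal - (lam A).toReal) / t)
        (𝓝[≠] 0) (𝓝 (∫ u in A, βh u ∂lam)))
    (Aop : X →L[ℝ] EuclideanSpace ℝ (Fin M)) (m : EuclideanSpace ℝ (Fin M))
    (f : X → ℝ) (hf : f = fun u => Real.exp (-(1/2) * ‖Aop u - m‖ ^ 2))
    (G : ℝ) (hG : G = ∫ u, f u ∂lam)
    (μ : Measure X) (hμ : μ = lam.withDensity (fun u => ENNReal.ofReal (G⁻¹ * f u))) :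
    ∀ A : Set X, MeasurableSet A →
      Tendsto (fun t : ℝ => ((μ ((· + t • h) '' A)).toReal - (μ A).toReal) / t)
        (𝓝[≠] 0)
        (𝓝 (∫ u in A, (βh u - ⟪Aop u - m, Aop h⟫) ∂μ)) := by
  subst hf hμ
  have hG_pos : 0 < G := hG ▸ integral_exp_pos
    (Integrable.of_bound (by fun_prop) 1 (ae_of_all _ fun u => by simp))
  exact HasFominLogDeriv.withDensity_exp_neg_half_norm_sq hFomin hβh Aop m (inv_pos.2 hG_pos)

/-- Theorem 4.2 (first part): the posterior obtained from a Fomin-differentiable prior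
and a Gaussian likelihood is Fomin differentiable, with logarithmic derivative
`β^μ_h(u) = β^λ_h(u) − ⟨A u − m, A h⟩`. -/
theorem stmt6 {X : Type*} [NormedAddCommGroup X] [NormedSpace ℝ X] [CompleteSpace X]
    [TopologicalSpace.SeparableSpace X] [MeasurableSpace X] [BorelSpace X]
    {M : ℕ} (lam : Measure X) [IsProbabilityMeasure lam]
    (h : X) (βh : X → ℝ) (hβh : Integrable βh lam)
    (hFomin : ∀ A : Set X, MeasurableSet A →
      Tendsto (fun t : ℝ => ((lam ((· + t • h) '' A)).toReal - (lam A).toReal) / t)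
        (𝓝[≠] 0) (𝓝 (∫ u in A, βh u ∂lam)))
    (Aop : X →L[ℝ] EuclideanSpace ℝ (Fin M)) (m : EuclideanSpace ℝ (Fin M))
    (f : X → ℝ) (hf : f = fun u => Real.exp (-(1/2) * ‖Aop u - m‖ ^ 2))
    (G : ℝ) (hG : G = ∫ u, f u ∂lam)
    (μ : Measure X) (hμ : μ = lam.withDensity (fun u => ENNReal.ofReal (G⁻¹ * f u))) :
    ∀ A : Set X, MeasurableSet A →
      Tendsto (fun t : ℝ => ((μ ((· + t • h) '' A)).toReal - (μ A).toReal) / t)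
        (𝓝[≠] 0)
        (𝓝 (∫ u in A, (βh u - ⟪Aop u - m, Aop h⟫) ∂μ)) :=
  stmt6_general lam h βh hβh hFomin Aop m f hf G hG μ hμ
end

section
/- Let X be a separable Banach space, λ a Borel probability measure on X, A_op : X → ℝ^M a bounded linear map, m ∈ ℝ^M, h ∈ X, and β_h : X → ℝ measurable. Let f(u) = exp(−½|A_op u − m|²), G = ∫_X f dλ, and let μ be the probability measure with μ(A) = G^{−1} ∫_A f dλ. If ∫_X exp(ε|β_h(u)|) dλ(u) < ∞ for some ε > 0, then ∫_X exp(ε|β_h(u) − ⟨A_op u − m, A_op h⟩_{ℝ^M}|) dμ(u) < ∞ for that same ε. -/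
/-!
Completing the square, `-½ t² + t a ≤ a² / 2`, shows that the Gaussian likelihood
`exp (-½ ‖A u - m‖²)` absorbs the factor `exp (|ε| |⟪A u - m, A h⟫|)` up to the constant
`exp (ε² ‖A h‖² / 2)`. Hence the posterior integrand, density included, is bounded pointwise by a
constant multiple of the prior integrand `exp (ε |β_h|)`.
-/

open MeasureTheory RealInnerProductSpace
open scoped ENNReal

lemma neg_half_sq_add_mul_le (t a : ℝ) : -(1 / 2) * t ^ 2 + t * a ≤ a ^ 2 / 2 := by
  nlinarith [sq_nonneg (t - a)]

lemma mul_abs_sub_le (ε x y : ℝ) : ε * |x - y| ≤ ε * |x| + |ε| * |y| := by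
  rcases le_total 0 ε with hε | hε
  · rw [abs_of_nonneg hε, ← mul_add]
    exact mul_le_mul_of_nonneg_left (abs_sub _ _) hε
  · rw [abs_of_nonpos hε]
    nlinarith [abs_sub_abs_le_abs_sub x y]

lemma exp_neg_half_sq_mul_exp_abs_sub_inner_le {E : Type*} [NormedAddCommGroup E]
    [InnerProductSpace ℝ E] (v w : E) (ε β : ℝ) :
    Real.exp (-(1 / 2) * ‖v‖ ^ 2) * Real.exp (ε * |β - ⟪v, w⟫|) ≤
      Real.exp (ε ^ 2 * ‖w‖ ^ 2 / 2) * Real.exp (ε * |β|) := by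
  rw [← Real.exp_add, ← Real.exp_add, Real.exp_le_exp]
  have hcs : |ε| * |⟪v, w⟫| ≤ ‖v‖ * (|ε| * ‖w‖) := by
    rw [mul_left_comm]
    exact mul_le_mul_of_nonneg_left (abs_real_inner_le_norm v w) (abs_nonneg ε)
  calc -(1 / 2) * ‖v‖ ^ 2 + ε * |β - ⟪v, w⟫|
      ≤ -(1 / 2) * ‖v‖ ^ 2 + ‖v‖ * (|ε| * ‖w‖) + ε * |β| := by
        linarith [mul_abs_sub_le ε β ⟪v, w⟫]
    _ ≤ (|ε| * ‖w‖) ^ 2 / 2 + ε * |β| := by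
        linarith [neg_half_sq_add_mul_le ‖v‖ (|ε| * ‖w‖)]
    _ = ε ^ 2 * ‖w‖ ^ 2 / 2 + ε * |β| := by rw [mul_pow, sq_abs]

lemma lintegral_withDensity_lt_top_of_le {X : Type*} [MeasurableSpace X] {lam : Measure X}
    {d g k : X → ℝ≥0∞} (hd : Measurable d) {C : ℝ≥0∞} (hC : C ≠ ⊤)
    (hle : ∀ u, d u * g u ≤ C * k u) (hk : ∫⁻ u, k u ∂lam < ⊤) :
    ∫⁻ u, g u ∂lam.withDensity d < ⊤ :=
  calc ∫⁻ u, g u ∂lam.withDensity d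
      ≤ ∫⁻ u, d u * g u ∂lam := lintegral_withDensity_le_lintegral_mul lam hd g
    _ ≤ ∫⁻ u, C * k u ∂lam := lintegral_mono hle
    _ = C * ∫⁻ u, k u ∂lam := lintegral_const_mul' C k hC
    _ < ⊤ := ENNReal.mul_lt_top hC.lt_top hk

theorem stmt7_general {X : Type*} [NormedAddCommGroup X] [NormedSpace ℝ X]
    [MeasurableSpace X] [BorelSpace X]
    {M : ℕ} (lam : Measure X)
    (h : X) (βh : X → ℝ)
    (Aop : X →L[ℝ] EuclideanSpace ℝ (Fin M)) (m : EuclideanSpace ℝ (Fin M))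
    (f : X → ℝ) (hf : f = fun u => Real.exp (-(1/2) * ‖Aop u - m‖ ^ 2))
    (G : ℝ)
    (μ : Measure X) (hμ : μ = lam.withDensity (fun u => ENNReal.ofReal (G⁻¹ * f u)))
    (ε : ℝ)
    (hint : ∫⁻ u, ENNReal.ofReal (Real.exp (ε * |βh u|)) ∂lam < ⊤) :
    ∫⁻ u, ENNReal.ofReal (Real.exp (ε * |βh u - ⟪Aop u - m, Aop h⟫|)) ∂μ < ⊤ := by
  subst hf hμ
  refine lintegral_withDensity_lt_top_of_le (by fun_prop)
    (C := ENNReal.ofReal G⁻¹ * ENNReal.ofReal (Real.exp (ε ^ 2 * ‖Aop h‖ ^ 2 / 2)))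
    (by finiteness) (fun u => ?_) hint
  rw [ENNReal.ofReal_mul' (Real.exp_pos _).le, mul_assoc, mul_assoc,
    ← ENNReal.ofReal_mul (Real.exp_pos _).le, ← ENNReal.ofReal_mul (Real.exp_pos _).le]
  exact mul_le_mul_right (ENNReal.ofReal_le_ofReal
    (exp_neg_half_sq_mul_exp_abs_sub_inner_le (Aop u - m) (Aop h) ε (βh u))) _

/-- Theorem 4.2 (second part): exponential integrability of the prior logarithmic
derivative transfers to the posterior logarithmic derivative. -/
theorem stmt7 {X : Type*} [NormedAddCommGroup X] [NormedSpace ℝ X] [CompleteSpace X]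
    [TopologicalSpace.SeparableSpace X] [MeasurableSpace X] [BorelSpace X]
    {M : ℕ} (lam : Measure X) [IsProbabilityMeasure lam]
    (h : X) (βh : X → ℝ) (hβh_meas : Measurable βh)
    (Aop : X →L[ℝ] EuclideanSpace ℝ (Fin M)) (m : EuclideanSpace ℝ (Fin M))
    (f : X → ℝ) (hf : f = fun u => Real.exp (-(1/2) * ‖Aop u - m‖ ^ 2))
    (G : ℝ) (hG : G = ∫ u, f u ∂lam)
    (μ : Measure X) (hμ : μ = lam.withDensity (fun u => ENNReal.ofReal (G⁻¹ * f u)))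
    (ε : ℝ) (hε : 0 < ε)
    (hint : ∫⁻ u, ENNReal.ofReal (Real.exp (ε * |βh u|)) ∂lam < ⊤) :
    ∫⁻ u, ENNReal.ofReal (Real.exp (ε * |βh u - ⟪Aop u - m, Aop h⟫|)) ∂μ < ⊤ :=
  stmt7_general lam h βh Aop m f hf G μ hμ ε hint
end

section
/- Let X be a separable Banach space, A_op : X → ℝ^M a bounded linear map, m ∈ ℝ^M, and μ a Borel probability measure on X with ∫_X ‖v‖²_X dμ(v) < ∞. Let D ⊆ X, J : D → ℝ, and for each u ∈ D let β_u ∈ L¹(μ) satisfy ∫_X ( β_u(v) − ⟨A_op v − m, A_op u⟩_{ℝ^M} ) dμ(v) = 0. Define G(u) = ∫_X ( ½|A_op u − A_op v|² + J(u) + β_u(v) ) dμ(v) for u ∈ D. Then for all u ∈ D, G(u) = ½|A_op u − m|² + J(u) + C, where C = ½∫_X |A_op v|² dμ(v) − ½|m|² does not depend on u. In particular, a point û ∈ D minimizes G over D if and only if it minimizes u ↦ ½|A_op u − m|² + J(u) over D. -/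
open MeasureTheory Metric Filter Topology RealInnerProductSpace
open scoped ENNReal

/-! Expanding `½‖A u − A v‖²` and subtracting the centred term `β_u(v) − ⟪A v − m, A u⟫`
(which integrates to zero) leaves `½‖A u − m‖² + J u − ½‖m‖² + ½‖A v‖²` pointwise; integrating
gives the constant `C`, and an additive constant does not change the minimizers. -/

section ExpectedSquaredDistance

variable {Ω E : Type*} [MeasurableSpace Ω] {μ : Measure Ω} [IsProbabilityMeasure μ]
  [NormedAddCommGroup E] [InnerProductSpace ℝ E]

lemma half_norm_sub_sq_add_eq (a x m : E) (c b : ℝ) :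
    1 / 2 * ‖a - x‖ ^ 2 + c + b
      = (1 / 2 * ‖a - m‖ ^ 2 + c - 1 / 2 * ‖m‖ ^ 2) + 1 / 2 * ‖x‖ ^ 2 + (b - ⟪x - m, a⟫) := by
  rw [norm_sub_sq_real a x, norm_sub_sq_real a m, inner_sub_left, real_inner_comm a x,
    real_inner_comm a m]
  ring

theorem integral_half_norm_sub_sq_add {f : Ω → E} (hf : MemLp f 2 μ) (a m : E) (c : ℝ)
    {b : Ω → ℝ} (hb : Integrable b μ) (hb_zero : ∫ v, (b v - ⟪f v - m, a⟫) ∂μ = 0) :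
    ∫ v, (1 / 2 * ‖a - f v‖ ^ 2 + c + b v) ∂μ
      = 1 / 2 * ‖a - m‖ ^ 2 + c + ((1 / 2) * (∫ v, ‖f v‖ ^ 2 ∂μ) - (1 / 2) * ‖m‖ ^ 2) := by
  have hf_sq : Integrable (fun v => 1 / 2 * ‖f v‖ ^ 2) μ :=
    (hf.integrable_norm_pow two_ne_zero).const_mul _
  have hb_centred : Integrable (fun v => b v - ⟪f v - m, a⟫) μ :=
    hb.sub (((hf.integrable one_le_two).sub (integrable_const m)).inner_const a)
  have hconst_sq : Integrable (fun v => 1 / 2 * ‖a - m‖ ^ 2 + c - 1 / 2 * ‖m‖ ^ 2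
      + 1 / 2 * ‖f v‖ ^ 2) μ := (integrable_const _).add hf_sq
  conv_lhs => enter [2, v]; rw [half_norm_sub_sq_add_eq a (f v) m c (b v)]
  rw [integral_add hconst_sq hb_centred,
    integral_add (integrable_const _) hf_sq, hb_zero, integral_const, integral_const_mul]
  simp only [probReal_univ, one_smul]
  ring

end ExpectedSquaredDistance

theorem stmt9_general {X : Type*} [NormedAddCommGroup X] [NormedSpace ℝ X]
    [TopologicalSpace.SeparableSpace X] [MeasurableSpace X] [BorelSpace X]
    {M : ℕ} (Aop : X →L[ℝ] EuclideanSpace ℝ (Fin M)) (m : EuclideanSpace ℝ (Fin M))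
    (μ : Measure X) [IsProbabilityMeasure μ]
    (hmom : Integrable (fun v => ‖v‖ ^ 2) μ)
    (D : Set X) (J : X → ℝ) (β : X → X → ℝ)
    (hβint : ∀ u ∈ D, Integrable (β u) μ)
    (hzero : ∀ u ∈ D, ∫ v, (β u v - ⟪Aop v - m, Aop u⟫) ∂μ = 0)
    (G : X → ℝ)
    (hG : ∀ u ∈ D, G u = ∫ v, ((1:ℝ)/2 * ‖Aop u - Aop v‖ ^ 2 + J u + β u v) ∂μ)
    (C : ℝ) (hC : C = (1/2) * (∫ v, ‖Aop v‖ ^ 2 ∂μ) - (1/2) * ‖m‖ ^ 2) :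
    (∀ u ∈ D, G u = (1/2) * ‖Aop u - m‖ ^ 2 + J u + C) ∧
    (∀ uhat ∈ D, ((∀ u ∈ D, G uhat ≤ G u) ↔
      (∀ u ∈ D, (1/2) * ‖Aop uhat - m‖ ^ 2 + J uhat
        ≤ (1/2) * ‖Aop u - m‖ ^ 2 + J u))) := by
  -- separability of `X` is what makes `id` strongly measurable
  have hA : MemLp (fun v => Aop v) 2 μ :=
    Aop.comp_memLp' ((memLp_two_iff_integrable_sq_norm aestronglyMeasurable_id).2 hmom)
  have hG_eq : ∀ u ∈ D, G u = (1/2) * ‖Aop u - m‖ ^ 2 + J u + C := fun u hu => by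
    rw [hG u hu, hC]
    exact integral_half_norm_sub_sq_add hA (Aop u) m (J u) (hβint u hu) (hzero u hu)
  refine ⟨hG_eq, fun uhat huhat => forall₂_congr fun u hu => ?_⟩
  rw [hG_eq uhat huhat, hG_eq u hu]
  exact add_le_add_iff_right C

/-- Theorem 4.6(1): the Bayes cost built from the homogeneous Bregman distance equals
`½|A u − m|² + J(u)` up to an additive constant; hence the weak MAP estimate
minimizes the Bayes cost. -/
theorem stmt9 {X : Type*} [NormedAddCommGroup X] [NormedSpace ℝ X] [CompleteSpace X]
    [TopologicalSpace.SeparableSpace X] [MeasurableSpace X] [BorelSpace X]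
    {M : ℕ} (Aop : X →L[ℝ] EuclideanSpace ℝ (Fin M)) (m : EuclideanSpace ℝ (Fin M))
    (μ : Measure X) [IsProbabilityMeasure μ]
    (hmom : Integrable (fun v => ‖v‖ ^ 2) μ)
    (D : Set X) (J : X → ℝ) (β : X → X → ℝ)
    (hβint : ∀ u ∈ D, Integrable (β u) μ)
    (hzero : ∀ u ∈ D, ∫ v, (β u v - ⟪Aop v - m, Aop u⟫) ∂μ = 0)
    (G : X → ℝ)
    (hG : ∀ u ∈ D, G u = ∫ v, ((1:ℝ)/2 * ‖Aop u - Aop v‖ ^ 2 + J u + β u v) ∂μ)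
    (C : ℝ) (hC : C = (1/2) * (∫ v, ‖Aop v‖ ^ 2 ∂μ) - (1/2) * ‖m‖ ^ 2) :
    (∀ u ∈ D, G u = (1/2) * ‖Aop u - m‖ ^ 2 + J u + C) ∧
    (∀ uhat ∈ D, ((∀ u ∈ D, G uhat ≤ G u) ↔
      (∀ u ∈ D, (1/2) * ‖Aop uhat - m‖ ^ 2 + J uhat
        ≤ (1/2) * ‖Aop u - m‖ ^ 2 + J u))) :=
  stmt9_general Aop m μ hmom D J β hβint hzero G hG C hC
end

section
/- Let X be a separable Banach space, Y a separable Hilbert space, L : X → Y a bounded linear map, A_op : X → ℝ^M a bounded linear map, and μ a Borel probability measure on X with ∫_X ‖v‖²_X dμ(v) < ∞. Let u_CM = ∫_X v dμ(v) (Bochner integral), let û ∈ X, and let D : X × X → ℝ be such that v ↦ D(û, v) and v ↦ D(u_CM, v) are μ-integrable. If ∫_X ( ½|A_op û − A_op v|² + D(û, v) ) dμ(v) ≤ ∫_X ( ½|A_op u − A_op v|² + D(u, v) ) dμ(v) holds for u = u_CM (e.g. because û minimizes this Bayes cost), and u_CM satisfies ∫_X ( ½|A_op u_CM − A_op v|²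 + (β/2)‖L u_CM − L v‖²_Y ) dμ(v) ≤ ∫_X ( ½|A_op û − A_op v|² + (β/2)‖L û − L v‖²_Y ) dμ(v) for every β > 0, then ∫_X D(û, v) dμ(v) ≤ ∫_X D(u_CM, v) dμ(v). -/
/-! Letting β → 0 in the optimality of `uCM` for the regularized costs shows that `uCM` has the
smaller data-fit term `∫ ½‖Aop u - Aop v‖²`; subtracting this from the Bayes-cost inequality for
`uhat` leaves the comparison of the `D`-terms. -/

open MeasureTheory Filter Topology

lemma le_of_forall_pos_le_add_mul {a b c : ℝ} (h : ∀ β : ℝ, 0 < β → a ≤ b + β * c) : a ≤ b := by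
  have hlim : Tendsto (fun β : ℝ => b + β * c) (𝓝[>] 0) (𝓝 b) :=
    ((by fun_prop : Continuous fun β : ℝ => b + β * c).tendsto' 0 b (by simp)).mono_left
      nhdsWithin_le_nhds
  exact ge_of_tendsto hlim (eventually_nhdsWithin_of_forall h)

lemma integral_le_of_forall_pos_integral_add_mul_le {X : Type*} [MeasurableSpace X]
    {μ : Measure X} {f g p q : X → ℝ}
    (hf : Integrable f μ) (hg : Integrable g μ) (hp : Integrable p μ) (hq : Integrable q μ)
    (hp_nonneg : 0 ≤ᵐ[μ] p)
    (h : ∀ β : ℝ, 0 < β → ∫ v, (f v + β / 2 * p v) ∂μ ≤ ∫ v, (g v + β / 2 * q v) ∂μ) :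
    ∫ v, f v ∂μ ≤ ∫ v, g v ∂μ := by
  refine le_of_forall_pos_le_add_mul (c := (∫ v, q v ∂μ) / 2) fun β hβ => ?_
  have hβ' := h β hβ
  rw [integral_add hf (hp.const_mul _), integral_add hg (hq.const_mul _), integral_const_mul,
    integral_const_mul] at hβ'
  have : 0 ≤ β / 2 * ∫ v, p v ∂μ := mul_nonneg (by positivity) (integral_nonneg_of_ae hp_nonneg)
  linarith

lemma integrable_norm_map_sub_map_sq {X C : Type*} [NormedAddCommGroup X] [NormedSpace ℝ X]
    [MeasurableSpace X] [OpensMeasurableSpace X] [NormedAddCommGroup C] [NormedSpace ℝ C]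
    {μ : Measure X} [IsFiniteMeasure μ] (hmom : Integrable (fun v => ‖v‖ ^ 2) μ)
    (T : X →L[ℝ] C) (u : X) :
    Integrable (fun v => ‖T u - T v‖ ^ 2) μ := by
  refine ((integrable_const (2 * ‖T u‖ ^ 2)).add (hmom.const_mul (2 * ‖T‖ ^ 2))).mono'
    (by fun_prop : Continuous fun v => ‖T u - T v‖ ^ 2).aestronglyMeasurable
    (Eventually.of_forall fun v => ?_)
  calc ‖‖T u - T v‖ ^ 2‖ = ‖T u - T v‖ ^ 2 := by simp
    _ ≤ (‖T u‖ + ‖T v‖) ^ 2 := by gcongr; exact norm_sub_le _ _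
    _ ≤ 2 * (‖T u‖ ^ 2 + ‖T v‖ ^ 2) := add_sq_le
    _ ≤ 2 * (‖T u‖ ^ 2 + (‖T‖ * ‖v‖) ^ 2) := by gcongr; exact T.le_opNorm v
    _ = 2 * ‖T u‖ ^ 2 + 2 * ‖T‖ ^ 2 * ‖v‖ ^ 2 := by ring

theorem stmt10_general {X Y : Type*} [NormedAddCommGroup X] [NormedSpace ℝ X]
    [MeasurableSpace X] [BorelSpace X]
    [NormedAddCommGroup Y] [InnerProductSpace ℝ Y]
    {M : ℕ} (L : X →L[ℝ] Y) (Aop : X →L[ℝ] EuclideanSpace ℝ (Fin M))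
    (μ : Measure X) [IsProbabilityMeasure μ]
    (hmom : Integrable (fun v => ‖v‖ ^ 2) μ)
    (uCM : X)
    (uhat : X) (D : X → X → ℝ)
    (hD1 : Integrable (fun v => D uhat v) μ)
    (hD2 : Integrable (fun v => D uCM v) μ)
    (hmin : ∫ v, ((1:ℝ)/2 * ‖Aop uhat - Aop v‖ ^ 2 + D uhat v) ∂μ
      ≤ ∫ v, ((1:ℝ)/2 * ‖Aop uCM - Aop v‖ ^ 2 + D uCM v) ∂μ)
    (hCM : ∀ β : ℝ, 0 < β →
      ∫ v, ((1:ℝ)/2 * ‖Aop uCM - Aop v‖ ^ 2 + β / 2 * ‖L uCM - L v‖ ^ 2) ∂μ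
        ≤ ∫ v, ((1:ℝ)/2 * ‖Aop uhat - Aop v‖ ^ 2 + β / 2 * ‖L uhat - L v‖ ^ 2) ∂μ) :
    ∫ v, D uhat v ∂μ ≤ ∫ v, D uCM v ∂μ := by
  have hAhat := (integrable_norm_map_sub_map_sq hmom Aop uhat).const_mul (1 / 2)
  have hACM := (integrable_norm_map_sub_map_sq hmom Aop uCM).const_mul (1 / 2)
  have hdata_fit := integral_le_of_forall_pos_integral_add_mul_le hACM hAhat
    (integrable_norm_map_sub_map_sq hmom L uCM) (integrable_norm_map_sub_map_sq hmom L uhat)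
    (Eventually.of_forall fun v => by positivity) hCM
  rw [integral_add hAhat hD1, integral_add hACM hD2] at hmin
  linarith

/-- Theorem 4.6(2): in terms of the Bayes cost with respect to the (homogeneous Bregman)
distance `D`, a weak MAP estimate is more optimal than the conditional mean estimate. -/
theorem stmt10 {X Y : Type*} [NormedAddCommGroup X] [NormedSpace ℝ X] [CompleteSpace X]
    [TopologicalSpace.SeparableSpace X] [MeasurableSpace X] [BorelSpace X]
    [NormedAddCommGroup Y] [InnerProductSpace ℝ Y] [CompleteSpace Y]
    [TopologicalSpace.SeparableSpace Y]
    {M : ℕ} (L : X →L[ℝ] Y) (Aop : X →L[ℝ] EuclideanSpace ℝ (Fin M))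
    (μ : Measure X) [IsProbabilityMeasure μ]
    (hmom : Integrable (fun v => ‖v‖ ^ 2) μ)
    (uCM : X) (huCM : uCM = ∫ v, v ∂μ)
    (uhat : X) (D : X → X → ℝ)
    (hD1 : Integrable (fun v => D uhat v) μ)
    (hD2 : Integrable (fun v => D uCM v) μ)
    (hmin : ∫ v, ((1:ℝ)/2 * ‖Aop uhat - Aop v‖ ^ 2 + D uhat v) ∂μ
      ≤ ∫ v, ((1:ℝ)/2 * ‖Aop uCM - Aop v‖ ^ 2 + D uCM v) ∂μ)
    (hCM : ∀ β : ℝ, 0 < β →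
      ∫ v, ((1:ℝ)/2 * ‖Aop uCM - Aop v‖ ^ 2 + β / 2 * ‖L uCM - L v‖ ^ 2) ∂μ
        ≤ ∫ v, ((1:ℝ)/2 * ‖Aop uhat - Aop v‖ ^ 2 + β / 2 * ‖L uhat - L v‖ ^ 2) ∂μ) :
    ∫ v, D uhat v ∂μ ≤ ∫ v, D uCM v ∂μ :=
  stmt10_general L Aop μ hmom uCM uhat D hD1 hD2 hmin hCM
end

section
/- Let p > 1 and set σ_p = (∫_ℝ exp(−|x|^p) dx)^{−1}, so that π(x) = σ_p exp(−|x|^p) is a probability density on ℝ. Then π is differentiable on ℝ with π'(x) = −p·sign(x)·|x|^{p−1}·π(x), and its Fisher information is finite and given by ∫_ℝ π'(t)²/π(t) dt = p² σ_p ∫_ℝ |t|^{2(p−1)} exp(−|t|^p) dt = 2 p σ_p Γ(2 − 1/p), where Γ is the Gamma function. -/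
/-!
Differentiating `-|x| ^ p` gives `-p |x| ^ (p - 2) x = -p sign x |x| ^ (p - 1)`, so
`π'(t)² / π(t) = p² |t| ^ (2(p - 1)) π(t)`: the Fisher integrand is a constant multiple of the
even function `|t| ^ q e^{-|t| ^ p}` with `q = 2p - 2 > -1`. Folding the line onto `(0, ∞)` and
substituting `u = t ^ p` turns its integral into `(2 / p) Γ((q + 1) / p) = (2 / p) Γ(2 - 1 / p)`.
-/

open MeasureTheory Set Real

theorem Integrable.comp_abs_of_integrableOn_Ioi {E : Type*} [NormedAddCommGroup E]
    {f : ℝ → E} (hf : IntegrableOn f (Ioi 0)) : Integrable fun x => f |x| := by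
  set g := (Ioi (0 : ℝ)).indicator f
  have hg : Integrable g := hf.integrable_indicator measurableSet_Ioi
  -- `f |x| = g x + g (-x)` away from `x = 0`
  refine (hg.add hg.comp_neg).congr ?_
  filter_upwards [Measure.ae_ne volume (0 : ℝ)] with x hx
  rcases hx.lt_or_gt with hx | hx
  · simp [g, hx, hx.not_gt, abs_of_neg hx]
  · simp [g, hx, hx.not_gt, abs_of_pos hx]

theorem sign_mul_abs_rpow_sq {q : ℝ} (hq : q ≠ 0) (x : ℝ) :
    (sign x * |x| ^ q) ^ 2 = |x| ^ (2 * q) := by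
  rcases eq_or_ne x 0 with rfl | hx
  · simp [zero_rpow (mul_ne_zero two_ne_zero hq)]
  · have hsign : sign x ^ 2 = 1 := by
      rcases sign_apply_eq_of_ne_zero x hx with h | h <;> simp [h]
    rw [mul_pow, hsign, one_mul, sq, ← rpow_add (abs_pos.2 hx), two_mul]

theorem abs_rpow_sub_two_mul_self (p x : ℝ) : |x| ^ (p - 2) * x = sign x * |x| ^ (p - 1) := by
  rcases lt_trichotomy x 0 with hx | rfl | hx
  · rw [sign_of_neg hx, abs_of_neg hx, show p - 1 = p - 2 + 1 by ring,
      rpow_add_one (neg_pos.2 hx).ne']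
    ring
  · simp
  · rw [sign_of_pos hx, abs_of_pos hx, show p - 1 = p - 2 + 1 by ring, rpow_add_one hx.ne']
    ring

theorem hasDerivAt_exp_neg_abs_rpow {p : ℝ} (hp : 1 < p) (x : ℝ) :
    HasDerivAt (fun x => exp (-|x| ^ p)) (-p * sign x * |x| ^ (p - 1) * exp (-|x| ^ p)) x := by
  refine (hasDerivAt_abs_rpow x hp).neg.exp.congr_deriv ?_
  rw [Pi.neg_apply, mul_assoc p, abs_rpow_sub_two_mul_self]
  ring

theorem integrable_abs_rpow_mul_exp_neg_abs_rpow {p q : ℝ} (hp : 0 < p) (hq : -1 < q) :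
    Integrable fun x : ℝ => |x| ^ q * exp (-|x| ^ p) :=
  Integrable.comp_abs_of_integrableOn_Ioi (integrableOn_rpow_mul_exp_neg_rpow hq hp)

theorem integral_abs_rpow_mul_exp_neg_abs_rpow {p q : ℝ} (hp : 0 < p) (hq : -1 < q) :
    ∫ x : ℝ, |x| ^ q * exp (-|x| ^ p) = 2 / p * Gamma ((q + 1) / p) := by
  rw [integral_comp_abs (f := fun x => x ^ q * exp (-x ^ p)), integral_rpow_mul_exp_neg_rpow hp hq]
  ring

theorem sq_mul_div_self {K : Type*} [Field K] (a b : K) : (a * b) ^ 2 / b = a ^ 2 * b := by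
  rcases eq_or_ne b 0 with rfl | hb
  · simp
  · field_simp

theorem fisher_integrand_const_mul_exp_neg_abs_rpow {p : ℝ} (hp : p ≠ 1) (c t : ℝ) :
    (-p * sign t * |t| ^ (p - 1) * (c * exp (-|t| ^ p))) ^ 2 / (c * exp (-|t| ^ p))
      = p ^ 2 * c * (|t| ^ (2 * (p - 1)) * exp (-|t| ^ p)) := by
  rw [mul_assoc (-p), sq_mul_div_self, mul_pow, neg_sq, sign_mul_abs_rpow_sq (sub_ne_zero.2 hp)]
  ring

theorem stmt11_general (p : ℝ) (hp : 1 < p)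
    (σp : ℝ)
    (pdf : ℝ → ℝ) (hpdf : pdf = fun x => σp * Real.exp (-|x| ^ p)) :
    (∀ x : ℝ, HasDerivAt pdf (-p * Real.sign x * |x| ^ (p - 1) * pdf x) x) ∧
    Integrable (fun t : ℝ => (-p * Real.sign t * |t| ^ (p - 1) * pdf t) ^ 2 / pdf t) ∧
    (∫ t : ℝ, (-p * Real.sign t * |t| ^ (p - 1) * pdf t) ^ 2 / pdf t
      = p ^ 2 * σp * ∫ t : ℝ, |t| ^ (2 * (p - 1)) * Real.exp (-|t| ^ p)) ∧
    (p ^ 2 * σp * (∫ t : ℝ, |t| ^ (2 * (p - 1)) * Real.exp (-|t| ^ p))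
      = 2 * p * σp * Real.Gamma (2 - 1/p)) := by
  subst hpdf
  have hp0 : 0 < p := zero_lt_one.trans hp
  have hq : -1 < 2 * (p - 1) := by linarith
  simp_rw [fisher_integrand_const_mul_exp_neg_abs_rpow hp.ne']
  refine ⟨fun x => ?_, (integrable_abs_rpow_mul_exp_neg_abs_rpow hp0 hq).const_mul _,
    integral_const_mul _ _, ?_⟩
  · exact ((hasDerivAt_exp_neg_abs_rpow hp x).const_mul σp).congr_deriv (by ring)
  · rw [integral_abs_rpow_mul_exp_neg_abs_rpow hp0 hq,
      show (2 * (p - 1) + 1) / p = 2 - 1 / p by field_simp; ring]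
    field_simp

/-- Theorem 5.3 (key computation): the density `π(x) = σ_p exp(−|x|^p)`, `p > 1`, is
differentiable with `π'(x) = −p sign(x)|x|^{p−1} π(x)` and has finite Fisher information
`∫ π'(t)²/π(t) dt = p² σ_p ∫ |t|^{2(p−1)} e^{−|t|^p} dt = 2 p σ_p Γ(2 − 1/p)`. -/
theorem stmt11 (p : ℝ) (hp : 1 < p)
    (σp : ℝ) (hσ : σp = (∫ x : ℝ, Real.exp (-|x| ^ p))⁻¹)
    (pdf : ℝ → ℝ) (hpdf : pdf = fun x => σp * Real.exp (-|x| ^ p)) :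
    (∀ x : ℝ, HasDerivAt pdf (-p * Real.sign x * |x| ^ (p - 1) * pdf x) x) ∧
    Integrable (fun t : ℝ => (-p * Real.sign t * |t| ^ (p - 1) * pdf t) ^ 2 / pdf t) ∧
    (∫ t : ℝ, (-p * Real.sign t * |t| ^ (p - 1) * pdf t) ^ 2 / pdf t
      = p ^ 2 * σp * ∫ t : ℝ, |t| ^ (2 * (p - 1)) * Real.exp (-|t| ^ p)) ∧
    (p ^ 2 * σp * (∫ t : ℝ, |t| ^ (2 * (p - 1)) * Real.exp (-|t| ^ p))
      = 2 * p * σp * Real.Gamma (2 - 1/p)) :=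
  stmt11_general p hp σp pdf hpdf
end

section
/- Let 1 < p ≤ 2, let d be a positive integer, s, t ∈ ℝ, and let (h_ℓ)_{ℓ≥1} be a real sequence with Σ_{ℓ=1}^∞ ℓ^{(p/d)(ps−(p−1)t)+p/2−1} |h_ℓ|^p < ∞. For real sequences u = (u_ℓ) with ‖u‖ := ( Σ_{ℓ=1}^∞ ℓ^{p(t/d+1/2)−1} |u_ℓ|^p )^{1/p} < ∞, define Φ(u) = Σ_{ℓ=1}^∞ ℓ^{p(s/d+1/2)−1} sign(u_ℓ) |u_ℓ|^{p−1} h_ℓ (the series converges absolutely). Then Φ is sequentially continuous with respect to ‖·‖: if ‖u^n − u‖ → 0 where all u^n and u have finite ‖·‖-norm, then Φ(u^n) → Φ(u). -/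
/-!
Write `g(x) = sign x · |x|^(p-1)`. Since `0 < p - 1 ≤ 1`, `g` is `(p-1)`-Hölder, so
`|Φ(uⁿ) - Φ(u)| ≤ 2 ∑ ℓ^σ |uⁿ_ℓ - u_ℓ|^(p-1) |h_ℓ|`. The exponents satisfy
`(p-1)τ + η = pσ` (with `τ`, `η`, `σ` the weights of `u`, `h` and `Φ`), which is exactly what
Hölder's inequality with exponents `p/(p-1)` and `p` needs to bound this sum by
`‖uⁿ - u‖^(p-1) · ‖h‖`; the same inequality gives absolute convergence of the series.
-/

open Filter Topology Real

lemma abs_rpow_sub_rpow_le {α x y : ℝ} (hα0 : 0 ≤ α) (hα1 : α ≤ 1) (hx : 0 ≤ x) (hy : 0 ≤ y) :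
    |x ^ α - y ^ α| ≤ |x - y| ^ α := by
  wlog hyx : y ≤ x generalizing x y
  · rw [abs_sub_comm, abs_sub_comm x]
    exact this hy hx (le_of_not_ge hyx)
  have hsub : x ^ α ≤ (x - y) ^ α + y ^ α := by
    simpa using rpow_add_le_add_rpow (sub_nonneg.2 hyx) hy hα0 hα1
  rw [abs_of_nonneg (sub_nonneg.2 (rpow_le_rpow hy hyx hα0)), abs_of_nonneg (sub_nonneg.2 hyx)]
  linarith

lemma abs_sign_le_one (x : ℝ) : |sign x| ≤ 1 := by
  rcases sign_apply_eq x with h | h | h <;> simp [h]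

lemma abs_sign_mul_rpow_le (α x : ℝ) : |sign x * |x| ^ α| ≤ |x| ^ α := by
  rw [abs_mul, abs_of_nonneg (rpow_nonneg (abs_nonneg x) α)]
  exact mul_le_of_le_one_left (rpow_nonneg (abs_nonneg x) α) (abs_sign_le_one x)

lemma abs_sign_mul_rpow_sub_le {α : ℝ} (hα0 : 0 < α) (hα1 : α ≤ 1) (x y : ℝ) :
    |sign x * |x| ^ α - sign y * |y| ^ α| ≤ 2 * |x - y| ^ α := by
  have of_nonneg : ∀ z : ℝ, 0 ≤ z → sign z * |z| ^ α = z ^ α := by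
    intro z hz
    rcases hz.eq_or_lt with rfl | hz
    · simp [zero_rpow hα0.ne']
    · rw [sign_of_pos hz, abs_of_pos hz, one_mul]
  have of_nonpos : ∀ z : ℝ, z ≤ 0 → sign z * |z| ^ α = -(-z) ^ α := by
    intro z hz
    rw [← neg_neg z, sign_neg, abs_neg, neg_neg, neg_mul, of_nonneg (-z) (neg_nonneg.2 hz)]
  have hd : 0 ≤ |x - y| ^ α := rpow_nonneg (abs_nonneg _) α
  -- For `b ≤ 0 ≤ a`, both `|a|` and `|b|` are at most `|a - b|`.
  have opposite : ∀ a b : ℝ, b ≤ 0 → 0 ≤ a →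
      |sign a * |a| ^ α - sign b * |b| ^ α| ≤ 2 * |a - b| ^ α := by
    intro a b hb ha
    have hab : |a - b| = a - b := abs_of_nonneg (by linarith)
    have ha' : |a| ^ α ≤ |a - b| ^ α :=
      rpow_le_rpow (abs_nonneg a) (by rw [hab, abs_of_nonneg ha]; linarith) hα0.le
    have hb' : |b| ^ α ≤ |a - b| ^ α :=
      rpow_le_rpow (abs_nonneg b) (by rw [hab, abs_of_nonpos hb]; linarith) hα0.le
    calc _ ≤ |sign a * |a| ^ α| + |sign b * |b| ^ α| := abs_sub _ _
      _ ≤ |a| ^ α + |b| ^ α := add_le_add (abs_sign_mul_rpow_le α a) (abs_sign_mul_rpow_le α b)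
      _ ≤ 2 * |a - b| ^ α := by linarith
  rcases le_total 0 x with hx | hx <;> rcases le_total 0 y with hy | hy
  · rw [of_nonneg x hx, of_nonneg y hy]
    linarith [abs_rpow_sub_rpow_le hα0.le hα1 hx hy]
  · exact opposite x y hy hx
  · rw [abs_sub_comm, abs_sub_comm x]
    exact opposite y x hx hy
  · rw [of_nonpos x hx, of_nonpos y hy, neg_sub_neg]
    have := abs_rpow_sub_rpow_le hα0.le hα1 (neg_nonneg.2 hy) (neg_nonneg.2 hx)
    rw [neg_sub_neg] at this
    linarith

lemma abs_sub_rpow_le {p : ℝ} (hp : 1 ≤ p) (x y : ℝ) :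
    |x - y| ^ p ≤ 2 ^ (p - 1) * (|x| ^ p + |y| ^ p) := by
  have h := NNReal.rpow_add_le_mul_rpow_add_rpow ⟨|x|, abs_nonneg x⟩ ⟨|y|, abs_nonneg y⟩ hp
  calc |x - y| ^ p ≤ (|x| + |y|) ^ p := rpow_le_rpow (abs_nonneg _) (abs_sub _ _) (by linarith)
    _ ≤ 2 ^ (p - 1) * (|x| ^ p + |y| ^ p) := by exact_mod_cast h

section Series

variable {ι : Type*}

theorem summable_and_tsum_rpow_mul_rpow_le {A B : ι → ℝ} {θ : ℝ} (hθ0 : 0 < θ) (hθ1 : θ < 1)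
    (hA : ∀ i, 0 ≤ A i) (hB : ∀ i, 0 ≤ B i) (hAs : Summable A) (hBs : Summable B) :
    Summable (fun i => A i ^ θ * B i ^ (1 - θ)) ∧
      ∑' i, A i ^ θ * B i ^ (1 - θ) ≤ (∑' i, A i) ^ θ * (∑' i, B i) ^ (1 - θ) := by
  have hθ1' : (1 - θ) ≠ 0 := by linarith
  have hpq : θ⁻¹.HolderConjugate (1 - θ)⁻¹ := .inv_inv hθ0 (by linarith) (by ring)
  have hA' : (fun i => (A i ^ θ) ^ θ⁻¹) = A := funext fun i => rpow_rpow_inv (hA i) hθ0.ne'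
  have hB' : (fun i => (B i ^ (1 - θ)) ^ (1 - θ)⁻¹) = B :=
    funext fun i => rpow_rpow_inv (hB i) hθ1'
  have := summable_and_inner_le_Lp_mul_Lq_tsum_of_nonneg hpq
    (fun i => rpow_nonneg (hA i) θ) (fun i => rpow_nonneg (hB i) (1 - θ))
    (by rwa [hA']) (by rwa [hB'])
  rwa [hA', hB', one_div, one_div, inv_inv, inv_inv] at this

lemma weight_rpow_mul_abs_rpow_mul_abs_eq {p τ η σ w x c : ℝ} (hp : 0 < p) (hw : 0 < w)
    (hexp : (p - 1) * τ + η = p * σ) :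
    w ^ σ * |x| ^ (p - 1) * |c| =
      (w ^ τ * |x| ^ p) ^ ((p - 1) / p) * (w ^ η * |c| ^ p) ^ (1 - (p - 1) / p) := by
  have e1 : 1 - (p - 1) / p = p⁻¹ := by field_simp; ring
  have e2 : τ * ((p - 1) / p) + η * p⁻¹ = σ := by
    field_simp
    linear_combination hexp
  rw [e1, mul_rpow (rpow_nonneg hw.le τ) (rpow_nonneg (abs_nonneg x) p),
    mul_rpow (rpow_nonneg hw.le η) (rpow_nonneg (abs_nonneg c) p),
    ← rpow_mul hw.le, ← rpow_mul hw.le, ← rpow_mul (abs_nonneg x), ← rpow_mul (abs_nonneg c),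
    mul_div_cancel₀ _ hp.ne', mul_inv_cancel₀ hp.ne', rpow_one]
  rw [← e2, rpow_add hw]
  ring

lemma summable_and_tsum_weight_mul_le {p τ η σ : ℝ} (hp : 1 < p)
    (hexp : (p - 1) * τ + η = p * σ) {w v c : ι → ℝ} (hw : ∀ i, 0 < w i)
    (hv : Summable fun i => w i ^ τ * |v i| ^ p) (hc : Summable fun i => w i ^ η * |c i| ^ p) :
    Summable (fun i => w i ^ σ * |v i| ^ (p - 1) * |c i|) ∧
      ∑' i, w i ^ σ * |v i| ^ (p - 1) * |c i| ≤
        (∑' i, w i ^ τ * |v i| ^ p) ^ ((p - 1) / p) *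
          (∑' i, w i ^ η * |c i| ^ p) ^ (1 - (p - 1) / p) := by
  have hp0 : 0 < p := by linarith
  simp_rw [weight_rpow_mul_abs_rpow_mul_abs_eq hp0 (hw _) hexp]
  exact summable_and_tsum_rpow_mul_rpow_le (div_pos (by linarith) hp0)
    ((div_lt_one hp0).2 (by linarith))
    (fun i => mul_nonneg (rpow_nonneg (hw i).le τ) (rpow_nonneg (abs_nonneg _) p))
    (fun i => mul_nonneg (rpow_nonneg (hw i).le η) (rpow_nonneg (abs_nonneg _) p)) hv hc

lemma summable_mul_abs_sub_rpow {p : ℝ} (hp : 1 ≤ p) {a v u : ι → ℝ} (ha : ∀ i, 0 ≤ a i)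
    (hv : Summable fun i => a i * |v i| ^ p) (hu : Summable fun i => a i * |u i| ^ p) :
    Summable fun i => a i * |v i - u i| ^ p := by
  refine ((hv.add hu).mul_left (2 ^ (p - 1))).of_nonneg_of_le
    (fun i => mul_nonneg (ha i) (rpow_nonneg (abs_nonneg _) p)) fun i => ?_
  calc a i * |v i - u i| ^ p ≤ a i * (2 ^ (p - 1) * (|v i| ^ p + |u i| ^ p)) :=
        mul_le_mul_of_nonneg_left (abs_sub_rpow_le hp _ _) (ha i)
    _ = 2 ^ (p - 1) * (a i * |v i| ^ p + a i * |u i| ^ p) := by ring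

lemma abs_tsum_sign_mul_rpow_sub_le {α : ℝ} (hα0 : 0 < α) (hα1 : α ≤ 1) {a v u c : ι → ℝ}
    (ha : ∀ i, 0 ≤ a i) (hv : Summable fun i => a i * |v i| ^ α * |c i|)
    (hu : Summable fun i => a i * |u i| ^ α * |c i|)
    (hvu : Summable fun i => a i * |v i - u i| ^ α * |c i|) :
    |∑' i, a i * sign (v i) * |v i| ^ α * c i - ∑' i, a i * sign (u i) * |u i| ^ α * c i| ≤
      2 * ∑' i, a i * |v i - u i| ^ α * |c i| := by
  have summable_signed : ∀ z : ι → ℝ, Summable (fun i => a i * |z i| ^ α * |c i|) →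
      Summable fun i => a i * sign (z i) * |z i| ^ α * c i := by
    intro z hz
    refine hz.of_norm_bounded fun i => ?_
    rw [norm_eq_abs, mul_assoc (a i), abs_mul, abs_mul, abs_of_nonneg (ha i)]
    exact mul_le_mul_of_nonneg_right
      (mul_le_mul_of_nonneg_left (abs_sign_mul_rpow_le α (z i)) (ha i)) (abs_nonneg _)
  rw [← (summable_signed v hv).tsum_sub (summable_signed u hu), ← tsum_mul_left]
  refine (norm_eq_abs _).symm.trans_le (tsum_of_norm_bounded (hvu.mul_left 2).hasSum fun i => ?_)
  calc ‖a i * sign (v i) * |v i| ^ α * c i - a i * sign (u i) * |u i| ^ α * c i‖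
      = a i * |sign (v i) * |v i| ^ α - sign (u i) * |u i| ^ α| * |c i| := by
        rw [norm_eq_abs, ← abs_of_nonneg (ha i), ← abs_mul, ← abs_mul, abs_of_nonneg (ha i)]
        ring_nf
    _ ≤ a i * (2 * |v i - u i| ^ α) * |c i| := by
        exact mul_le_mul_of_nonneg_right
          (mul_le_mul_of_nonneg_left (abs_sign_mul_rpow_sub_le hα0 hα1 _ _) (ha i)) (abs_nonneg _)
    _ = 2 * (a i * |v i - u i| ^ α * |c i|) := by ring

end Series

theorem stmt16_general (p : ℝ) (hp1 : 1 < p) (hp2 : p ≤ 2) (d : ℕ) (s t : ℝ)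
    (h : ℕ → ℝ)
    (hh : Summable (fun ℓ : ℕ =>
      ((ℓ : ℝ) + 1) ^ ((p/(d:ℝ))*(p*s-(p-1)*t) + p/2 - 1) * |h ℓ| ^ p))
    (Φ : (ℕ → ℝ) → ℝ)
    (hΦ : Φ = fun u : ℕ → ℝ => ∑' ℓ : ℕ,
      ((ℓ : ℝ) + 1) ^ (p*(s/(d:ℝ)+1/2)-1) * Real.sign (u ℓ) * |u ℓ| ^ (p-1) * h ℓ)
    (u : ℕ → ℝ) (uN : ℕ → ℕ → ℝ)
    (hu : Summable (fun ℓ : ℕ => ((ℓ : ℝ) + 1) ^ (p*(t/(d:ℝ)+1/2)-1) * |u ℓ| ^ p))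
    (huN : ∀ n : ℕ, Summable (fun ℓ : ℕ =>
      ((ℓ : ℝ) + 1) ^ (p*(t/(d:ℝ)+1/2)-1) * |uN n ℓ| ^ p))
    (hconv : Tendsto
      (fun n : ℕ =>
        (∑' ℓ : ℕ, ((ℓ : ℝ) + 1) ^ (p*(t/(d:ℝ)+1/2)-1) * |uN n ℓ - u ℓ| ^ p) ^ (1/p))
      atTop (𝓝 0)) :
    Summable (fun ℓ : ℕ =>
      ((ℓ : ℝ) + 1) ^ (p*(s/(d:ℝ)+1/2)-1) * |u ℓ| ^ (p-1) * |h ℓ|) ∧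
    (∀ n : ℕ, Summable (fun ℓ : ℕ =>
      ((ℓ : ℝ) + 1) ^ (p*(s/(d:ℝ)+1/2)-1) * |uN n ℓ| ^ (p-1) * |h ℓ|)) ∧
    Tendsto (fun n : ℕ => Φ (uN n)) atTop (𝓝 (Φ u)) := by
  set τ := p*(t/(d:ℝ)+1/2)-1
  set σ := p*(s/(d:ℝ)+1/2)-1
  set η := (p/(d:ℝ))*(p*s-(p-1)*t) + p/2 - 1
  have hexp : (p - 1) * τ + η = p * σ := by ring
  have hw : ∀ ℓ : ℕ, (0 : ℝ) < ℓ + 1 := fun ℓ => by positivity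
  have holder := fun (v : ℕ → ℝ) (hv : Summable fun ℓ : ℕ => ((ℓ : ℝ) + 1) ^ τ * |v ℓ| ^ p) =>
    summable_and_tsum_weight_mul_le hp1 hexp hw hv hh
  refine ⟨(holder u hu).1, fun n => (holder (uN n) (huN n)).1, ?_⟩
  have hdiff := fun n =>
    summable_mul_abs_sub_rpow hp1.le (fun ℓ => rpow_nonneg (hw ℓ).le τ) (huN n) hu
  set S := fun n => ∑' ℓ : ℕ, ((ℓ : ℝ) + 1) ^ τ * |uN n ℓ - u ℓ| ^ p
  have hS : Tendsto (fun n => S n ^ ((p - 1) / p)) atTop (𝓝 0) := by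
    have := hconv.rpow_const (p := p - 1) (Or.inr (by linarith))
    rw [zero_rpow (by linarith)] at this
    refine this.congr fun n => ?_
    rw [← rpow_mul (tsum_nonneg fun ℓ => by positivity), one_div_mul_eq_div]
  have key : ∀ n, ‖Φ (uN n) - Φ u‖ ≤ 2 * (S n ^ ((p - 1) / p) *
      (∑' ℓ : ℕ, ((ℓ : ℝ) + 1) ^ η * |h ℓ| ^ p) ^ (1 - (p - 1) / p)) := fun n => by
    rw [hΦ, norm_eq_abs]
    exact (abs_tsum_sign_mul_rpow_sub_le (by linarith) (by linarith)
      (fun ℓ => rpow_nonneg (hw ℓ).le σ)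
      (holder _ (huN n)).1 (holder u hu).1 (holder _ (hdiff n)).1).trans
        (mul_le_mul_of_nonneg_left (holder _ (hdiff n)).2 zero_le_two)
  rw [← tendsto_sub_nhds_zero_iff]
  refine squeeze_zero_norm key ?_
  simpa using (hS.mul_const _).const_mul 2

/-- Proposition 5.7: for `1 < p ≤ 2`, the (pointwise defined) logarithmic derivative of
the Besov `B^s_p` prior along `h ∈ B^{ps−(p−1)t}_p` is sequentially continuous with
respect to the sequence-space `B^t_p` norm.
Coordinates are indexed by `ℓ : ℕ`, with `ℓ + 1` playing the role of `ℓ ≥ 1`. -/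
theorem stmt16 (p : ℝ) (hp1 : 1 < p) (hp2 : p ≤ 2) (d : ℕ) (hd : 0 < d) (s t : ℝ)
    (h : ℕ → ℝ)
    (hh : Summable (fun ℓ : ℕ =>
      ((ℓ : ℝ) + 1) ^ ((p/(d:ℝ))*(p*s-(p-1)*t) + p/2 - 1) * |h ℓ| ^ p))
    (Φ : (ℕ → ℝ) → ℝ)
    (hΦ : Φ = fun u : ℕ → ℝ => ∑' ℓ : ℕ,
      ((ℓ : ℝ) + 1) ^ (p*(s/(d:ℝ)+1/2)-1) * Real.sign (u ℓ) * |u ℓ| ^ (p-1) * h ℓ)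
    (u : ℕ → ℝ) (uN : ℕ → ℕ → ℝ)
    (hu : Summable (fun ℓ : ℕ => ((ℓ : ℝ) + 1) ^ (p*(t/(d:ℝ)+1/2)-1) * |u ℓ| ^ p))
    (huN : ∀ n : ℕ, Summable (fun ℓ : ℕ =>
      ((ℓ : ℝ) + 1) ^ (p*(t/(d:ℝ)+1/2)-1) * |uN n ℓ| ^ p))
    (hconv : Tendsto
      (fun n : ℕ =>
        (∑' ℓ : ℕ, ((ℓ : ℝ) + 1) ^ (p*(t/(d:ℝ)+1/2)-1) * |uN n ℓ - u ℓ| ^ p) ^ (1/p))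
      atTop (𝓝 0)) :
    Summable (fun ℓ : ℕ =>
      ((ℓ : ℝ) + 1) ^ (p*(s/(d:ℝ)+1/2)-1) * |u ℓ| ^ (p-1) * |h ℓ|) ∧
    (∀ n : ℕ, Summable (fun ℓ : ℕ =>
      ((ℓ : ℝ) + 1) ^ (p*(s/(d:ℝ)+1/2)-1) * |uN n ℓ| ^ (p-1) * |h ℓ|)) ∧
    Tendsto (fun n : ℕ => Φ (uN n)) atTop (𝓝 (Φ u)) :=
  stmt16_general p hp1 hp2 d s t h hh Φ hΦ u uN hu huN hconv
end
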